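/- arXiv:2512.21523 — 13 statements merged into one kernel-verified Lean document; each statement's English description precedes it below -/
import Mathlib

section
/- Let d, ε, χ, μ be positive real numbers, let a be a real number with a² = μχ²/(2dε(2d+χ)), and let b ∈ ℝ. Define ū(x) := 1/cos(a·x + b)² and v̄(x) := (2ad/χ)·tan(a·x + b). Then for every x ∈ ℝ with cos(a·x + b) ≠ 0, both d·ū″(x) − χ·(ū·v̄)′(x) = 0 and ε·v̄″(x) + 2ε·v̄(x)·v̄′(x) − μ·ū′(x) = 0 hold. -/
set_option maxHeartbeats 1000000 in
/-- The secant/tangent profile `ū = sec²(ax+b)`, `v̄ = (2ad/χ)tan(ax+b)` solves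
the steady-state system of the transformed Keller–Segel model. -/
theorem stmt_2 (d ε χ μ : ℝ) (hd : 0 < d) (hε : 0 < ε) (hχ : 0 < χ) (hμ : 0 < μ)
    (a b : ℝ) (ha : a ^ 2 = μ * χ ^ 2 / (2 * d * ε * (2 * d + χ)))
    (ubar vbar : ℝ → ℝ)
    (hu : ubar = fun x => 1 / Real.cos (a * x + b) ^ 2)
    (hv : vbar = fun x => (2 * a * d / χ) * Real.tan (a * x + b)) :
    ∀ x : ℝ, Real.cos (a * x + b) ≠ 0 →
      d * deriv (deriv ubar) x - χ * deriv (fun y => ubar y * vbar y) x = 0 ∧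
      ε * deriv (deriv vbar) x + 2 * ε * vbar x * deriv vbar x
        - μ * deriv ubar x = 0 := by
  subst hu hv
  have haff : ∀ y : ℝ, HasDerivAt (fun y : ℝ => a * y + b) a y := by
    intro y
    simpa using ((hasDerivAt_id y).const_mul a).add_const b
  have hu' : ∀ y : ℝ, Real.cos (a * y + b) ≠ 0 →
      HasDerivAt (fun y => 1 / Real.cos (a * y + b) ^ 2)
        (2 * a * Real.sin (a * y + b) / Real.cos (a * y + b) ^ 3) y := by
    intro y hy
    have hc : HasDerivAt (fun y => Real.cos (a * y + b))
        (-Real.sin (a * y + b) * a) y := (haff y).cos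
    have hc2 := hc.fun_pow 2
    have h2 := hc2.inv (pow_ne_zero 2 hy)
    have : HasDerivAt (fun y => (Real.cos (a * y + b) ^ 2)⁻¹)
        (2 * a * Real.sin (a * y + b) / Real.cos (a * y + b) ^ 3) y := by
      refine h2.congr_deriv ?_
      field_simp
      ring
    simpa [one_div] using this
  have hv' : ∀ y : ℝ, Real.cos (a * y + b) ≠ 0 →
      HasDerivAt (fun y => 2 * a * d / χ * Real.tan (a * y + b))
        (2 * a * d / χ * (1 / Real.cos (a * y + b) ^ 2 * a)) y := by
    intro y hy
    exact (((Real.hasDerivAt_tan hy).comp y (haff y)).const_mul _)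
  intro x hx
  have hcont : Continuous fun y : ℝ => Real.cos (a * y + b) := by continuity
  have hnhds : ∀ᶠ y in nhds x, Real.cos (a * y + b) ≠ 0 :=
    hcont.continuousAt.eventually_ne hx
  -- second derivatives via eventual equality
  have hdu : deriv (fun y => 1 / Real.cos (a * y + b) ^ 2)
      =ᶠ[nhds x] fun y => 2 * a * Real.sin (a * y + b) / Real.cos (a * y + b) ^ 3 :=
    hnhds.mono fun y hy => (hu' y hy).deriv
  have hdv : deriv (fun y => 2 * a * d / χ * Real.tan (a * y + b))
      =ᶠ[nhds x] fun y => 2 * a * d / χ * (1 / Real.cos (a * y + b) ^ 2 * a) :=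
    hnhds.mono fun y hy => (hv' y hy).deriv
  set C := Real.cos (a * x + b) with hC
  set S := Real.sin (a * x + b) with hS
  have hsin : HasDerivAt (fun y => Real.sin (a * y + b)) (C * a) x := (haff x).sin
  have hcos : HasDerivAt (fun y => Real.cos (a * y + b)) (-S * a) x := (haff x).cos
  have hc3 := hcos.pow 3
  have hc2 := hcos.pow 2
  -- deriv (deriv ubar) x
  have hU2 : HasDerivAt (fun y => 2 * a * Real.sin (a * y + b) / Real.cos (a * y + b) ^ 3)
      ((2 * a * (C * a) * C ^ 3 - 2 * a * S * (3 * C ^ (3 - 1) * (-S * a))) / (C ^ 3) ^ 2) x :=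
    (hsin.const_mul (2 * a)).div hc3 (pow_ne_zero 3 hx)
  have hV2 : HasDerivAt (fun y => 2 * a * d / χ * (1 / Real.cos (a * y + b) ^ 2 * a))
      (2 * a * d / χ * (2 * a * S / C ^ 3 * a)) x := by
    have := ((hu' x hx).mul_const a).const_mul (2 * a * d / χ)
    convert this using 1
  have hddu : deriv (deriv (fun y => 1 / Real.cos (a * y + b) ^ 2)) x
      = (2 * a * (C * a) * C ^ 3 - 2 * a * S * (3 * C ^ (3 - 1) * (-S * a))) / (C ^ 3) ^ 2 := by
    rw [hdu.deriv_eq]; exact hU2.deriv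
  have hddv : deriv (deriv (fun y => 2 * a * d / χ * Real.tan (a * y + b))) x
      = 2 * a * d / χ * (2 * a * S / C ^ 3 * a) := by
    rw [hdv.deriv_eq]; exact hV2.deriv
  have hprod : deriv (fun y => (1 / Real.cos (a * y + b) ^ 2) *
        (2 * a * d / χ * Real.tan (a * y + b))) x
      = 2 * a * S / C ^ 3 * (2 * a * d / χ * Real.tan (a * x + b))
        + 1 / C ^ 2 * (2 * a * d / χ * (1 / C ^ 2 * a)) :=
    ((hu' x hx).mul (hv' x hx)).deriv
  have htan : Real.tan (a * x + b) = S / C := Real.tan_eq_sin_div_cos _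
  have hpy : S ^ 2 + C ^ 2 = 1 := Real.sin_sq_add_cos_sq _
  have hχ0 : χ ≠ 0 := ne_of_gt hχ
  have hd0 : (2 : ℝ) * d + χ ≠ 0 := by positivity
  have hε0 : ε ≠ 0 := ne_of_gt hε
  have hd0' : d ≠ 0 := ne_of_gt hd
  have ha' : a ^ 2 * (2 * d * ε * (2 * d + χ)) = μ * χ ^ 2 := by
    field_simp at ha
    linarith [ha]
  have hx' : Real.cos (a * x + b) ≠ 0 := hx
  clear_value C S
  constructor
  · rw [hddu, hprod, htan]
    clear hU2 hV2 hddu hddv hprod hdu hdv hu' hv' hsin hcos hc2 hc3 hnhds hcont haff ha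
    field_simp
    linear_combination (2 * a ^ 2 * d * C ^ 2) * hpy
  · beta_reduce
    rw [hddv, (hv' x hx').deriv, (hu' x hx').deriv, htan, ← hC, ← hS]
    clear hU2 hV2 hddu hddv hprod hdu hdv hu' hv' hsin hcos hc2 hc3 hnhds hcont haff ha
    field_simp
    linear_combination (2 * a * S) * ha'
end

section
/- Let d, ε, χ, μ be positive real numbers, let a be a real number with a² = μχ²/(2dε(2d+χ)), and let b ∈ ℝ. Define ū(x) := 1/sin(a·x + b)² and v̄(x) := −(2ad/χ)·cos(a·x + b)/sin(a·x + b). Then for every x ∈ ℝ with sin(a·x + b) ≠ 0, both d·ū″(x) − χ·(ū·v̄)′(x) = 0 and ε·v̄″(x) + 2ε·v̄(x)·v̄′(x) − μ·ū′(x) = 0 hold. -/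
open Real Filter

private lemma hlin (a b x : ℝ) : HasDerivAt (fun y : ℝ => a * y + b) a x := by
  simpa using ((hasDerivAt_id x).const_mul a).add_const b

private lemma hsin' (a b x : ℝ) : HasDerivAt (fun y : ℝ => Real.sin (a * y + b))
    (Real.cos (a * x + b) * a) x :=
  by have := (Real.hasDerivAt_sin (a * x + b)).comp x (hlin a b x); exact this

private lemma hcos' (a b x : ℝ) : HasDerivAt (fun y : ℝ => Real.cos (a * y + b))
    (-Real.sin (a * x + b) * a) x :=
  by have := (Real.hasDerivAt_cos (a * x + b)).comp x (hlin a b x); exact this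

private lemma hU {a b x : ℝ} (hx : Real.sin (a * x + b) ≠ 0) :
    HasDerivAt (fun y => 1 / Real.sin (a * y + b) ^ 2)
      (-2 * a * Real.cos (a * x + b) / Real.sin (a * x + b) ^ 3) x := by
  have h := (hasDerivAt_const x (1:ℝ)).div ((hsin' a b x).pow 2) (pow_ne_zero 2 hx)
  refine h.congr_deriv ?_
  symm
  simp only [Pi.pow_apply]
  field_simp
  ring

private lemma hU2 {a b x : ℝ} (hx : Real.sin (a * x + b) ≠ 0) :
    HasDerivAt (fun y => -2 * a * Real.cos (a * y + b) / Real.sin (a * y + b) ^ 3)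
      (2 * a ^ 2 / Real.sin (a * x + b) ^ 2
        + 6 * a ^ 2 * Real.cos (a * x + b) ^ 2 / Real.sin (a * x + b) ^ 4) x := by
  have h := (((hcos' a b x).const_mul (-2 * a)).div ((hsin' a b x).pow 3)
    (pow_ne_zero 3 hx))
  refine h.congr_deriv ?_
  symm
  simp only [Pi.pow_apply]
  field_simp
  ring

private lemma hV {a b x d χ : ℝ} (hχ : χ ≠ 0) (hx : Real.sin (a * x + b) ≠ 0) :
    HasDerivAt (fun y => -(2 * a * d / χ) * (Real.cos (a * y + b) / Real.sin (a * y + b)))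
      ((2 * a ^ 2 * d / χ) / Real.sin (a * x + b) ^ 2) x := by
  have h := (((hcos' a b x).div (hsin' a b x) hx).const_mul (-(2 * a * d / χ)))
  refine h.congr_deriv ?_
  symm
  have hp : Real.cos (a * x + b) ^ 2 = 1 - Real.sin (a * x + b) ^ 2 :=
    (Real.cos_sq' _)
  field_simp [hχ, hx]
  linear_combination (-a ^ 2 * d) * hp

private lemma hV2 {a b x d χ : ℝ} (hχ : χ ≠ 0) (hx : Real.sin (a * x + b) ≠ 0) :
    HasDerivAt (fun y => (2 * a ^ 2 * d / χ) / Real.sin (a * y + b) ^ 2)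
      (-(4 * a ^ 3 * d / χ) * Real.cos (a * x + b) / Real.sin (a * x + b) ^ 3) x := by
  have h := (hasDerivAt_const x (2 * a ^ 2 * d / χ)).div ((hsin' a b x).pow 2)
    (pow_ne_zero 2 hx)
  refine h.congr_deriv ?_
  symm
  simp only [Pi.pow_apply]
  field_simp [hχ, hx]
  ring

/-- The cosecant/cotangent profile `ū = csc²(ax+b)`, `v̄ = -(2ad/χ)cot(ax+b)`
solves the steady-state system of the transformed Keller–Segel model. -/
theorem stmt_3 (d ε χ μ : ℝ) (hd : 0 < d) (hε : 0 < ε) (hχ : 0 < χ) (hμ : 0 < μ)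
    (a b : ℝ) (ha : a ^ 2 = μ * χ ^ 2 / (2 * d * ε * (2 * d + χ)))
    (ubar vbar : ℝ → ℝ)
    (hu : ubar = fun x => 1 / Real.sin (a * x + b) ^ 2)
    (hv : vbar = fun x =>
      -(2 * a * d / χ) * (Real.cos (a * x + b) / Real.sin (a * x + b))) :
    ∀ x : ℝ, Real.sin (a * x + b) ≠ 0 →
      d * deriv (deriv ubar) x - χ * deriv (fun y => ubar y * vbar y) x = 0 ∧
      ε * deriv (deriv vbar) x + 2 * ε * vbar x * deriv vbar x
        - μ * deriv ubar x = 0 := by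
  subst hu hv
  intro x hx
  have hχ0 : χ ≠ 0 := hχ.ne'
  have hev : ∀ᶠ y in nhds x, Real.sin (a * y + b) ≠ 0 := by
    have hcont : ContinuousAt (fun y : ℝ => Real.sin (a * y + b)) x := by fun_prop
    exact hcont.eventually_ne hx
  have hdu : deriv (fun y => 1 / Real.sin (a * y + b) ^ 2)
      =ᶠ[nhds x] fun y => -2 * a * Real.cos (a * y + b) / Real.sin (a * y + b) ^ 3 :=
    hev.mono fun y hy => (hU hy).deriv
  have hdv : deriv (fun y =>
        -(2 * a * d / χ) * (Real.cos (a * y + b) / Real.sin (a * y + b)))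
      =ᶠ[nhds x] fun y => (2 * a ^ 2 * d / χ) / Real.sin (a * y + b) ^ 2 :=
    hev.mono fun y hy => (hV hχ0 hy).deriv
  have hdux : deriv (fun y => 1 / Real.sin (a * y + b) ^ 2) x
      = -2 * a * Real.cos (a * x + b) / Real.sin (a * x + b) ^ 3 := (hU hx).deriv
  have hdvx : deriv (fun y =>
        -(2 * a * d / χ) * (Real.cos (a * y + b) / Real.sin (a * y + b))) x
      = (2 * a ^ 2 * d / χ) / Real.sin (a * x + b) ^ 2 := (hV hχ0 hx).deriv
  have hd2u : deriv (deriv (fun y => 1 / Real.sin (a * y + b) ^ 2)) x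
      = 2 * a ^ 2 / Real.sin (a * x + b) ^ 2
        + 6 * a ^ 2 * Real.cos (a * x + b) ^ 2 / Real.sin (a * x + b) ^ 4 := by
    rw [hdu.deriv_eq]; exact (hU2 hx).deriv
  have hd2v : deriv (deriv (fun y =>
        -(2 * a * d / χ) * (Real.cos (a * y + b) / Real.sin (a * y + b)))) x
      = -(4 * a ^ 3 * d / χ) * Real.cos (a * x + b) / Real.sin (a * x + b) ^ 3 := by
    rw [hdv.deriv_eq]; exact (hV2 hχ0 hx).deriv
  have hprod : deriv (fun y => (1 / Real.sin (a * y + b) ^ 2) *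
        (-(2 * a * d / χ) * (Real.cos (a * y + b) / Real.sin (a * y + b)))) x
      = (-2 * a * Real.cos (a * x + b) / Real.sin (a * x + b) ^ 3) *
          (-(2 * a * d / χ) * (Real.cos (a * x + b) / Real.sin (a * x + b)))
        + (1 / Real.sin (a * x + b) ^ 2) *
          ((2 * a ^ 2 * d / χ) / Real.sin (a * x + b) ^ 2) :=
    ((hU hx).mul (hV hχ0 hx)).deriv
  have hp : Real.cos (a * x + b) ^ 2 = 1 - Real.sin (a * x + b) ^ 2 :=
    Real.cos_sq' _
  have ha' : a ^ 2 * (2 * d * ε * (2 * d + χ)) = μ * χ ^ 2 := by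
    rw [ha]
    field_simp
  constructor
  · rw [hd2u, hprod]
    field_simp [hχ0, hx]
    linear_combination (2 * d * a ^ 2) * hp
  · rw [hd2v, hdvx, hdux]
    field_simp [hχ0, hx]
    linear_combination (-2 * a * Real.cos (a * x + b)) * ha'
end

section
/- Let d, ε, χ, μ be positive real numbers, let a be a real number with a² = μχ²/(2dε(2d+χ)), and let b ∈ ℝ. Define ū(x) := 1/sinh(a·x + b)² and v̄(x) := −(2ad/χ)·cosh(a·x + b)/sinh(a·x + b). Then for every x ∈ ℝ with a·x + b ≠ 0, both d·ū″(x) − χ·(ū·v̄)′(x) = 0 and ε·v̄″(x) + 2ε·v̄(x)·v̄′(x) − μ·ū′(x) = 0 hold. -/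
set_option maxHeartbeats 1000000


/-- The hyperbolic profile `ū = csch²(ax+b)`, `v̄ = -(2ad/χ)coth(ax+b)` solves
the steady-state system of the transformed Keller–Segel model. -/
theorem stmt_4 (d ε χ μ : ℝ) (hd : 0 < d) (hε : 0 < ε) (hχ : 0 < χ) (hμ : 0 < μ)
    (a b : ℝ) (ha : a ^ 2 = μ * χ ^ 2 / (2 * d * ε * (2 * d + χ)))
    (ubar vbar : ℝ → ℝ)
    (hu : ubar = fun x => 1 / Real.sinh (a * x + b) ^ 2)
    (hv : vbar = fun x =>
      -(2 * a * d / χ) * (Real.cosh (a * x + b) / Real.sinh (a * x + b))) :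
    ∀ x : ℝ, a * x + b ≠ 0 →
      d * deriv (deriv ubar) x - χ * deriv (fun y => ubar y * vbar y) x = 0 ∧
      ε * deriv (deriv vbar) x + 2 * ε * vbar x * deriv vbar x
        - μ * deriv ubar x = 0 := by
  have hχ0 : χ ≠ 0 := ne_of_gt hχ
  subst hu hv
  -- shorthand derivative functions
  set u1 : ℝ → ℝ := fun y => -(2 * a) * Real.cosh (a * y + b) / Real.sinh (a * y + b) ^ 3 with hu1
  set v1 : ℝ → ℝ := fun y => (2 * a ^ 2 * d / χ) / Real.sinh (a * y + b) ^ 2 with hv1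
  -- basic derivative facts at any admissible point
  have hg : ∀ y : ℝ, HasDerivAt (fun z : ℝ => a * z + b) a y := by
    intro y
    simpa using ((hasDerivAt_id y).const_mul a).add_const b
  have hsinh : ∀ y : ℝ, HasDerivAt (fun z => Real.sinh (a * z + b))
      (Real.cosh (a * y + b) * a) y := fun y => (Real.hasDerivAt_sinh _).comp y (hg y)
  have hcosh : ∀ y : ℝ, HasDerivAt (fun z => Real.cosh (a * z + b))
      (Real.sinh (a * y + b) * a) y := fun y => (Real.hasDerivAt_cosh _).comp y (hg y)
  have hcsq : ∀ y : ℝ, Real.cosh (a * y + b) ^ 2 = Real.sinh (a * y + b) ^ 2 + 1 :=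
    fun y => Real.cosh_sq _
  have hsne : ∀ y : ℝ, a * y + b ≠ 0 → Real.sinh (a * y + b) ≠ 0 := by
    intro y hy
    simpa [Real.sinh_eq_zero] using hy
  have hU : ∀ y : ℝ, a * y + b ≠ 0 →
      HasDerivAt (fun z => 1 / Real.sinh (a * z + b) ^ 2) (u1 y) y := by
    intro y hy
    have hs0 := hsne y hy
    have h := (hasDerivAt_const y (1 : ℝ)).div ((hsinh y).pow 2) (pow_ne_zero 2 hs0)
    convert h using 1
    · rfl
    · rfl
    · rfl
    rw [hu1]
    simp only [Pi.pow_apply]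
    field_simp
    ring
  have hV : ∀ y : ℝ, a * y + b ≠ 0 →
      HasDerivAt (fun z => -(2 * a * d / χ) *
        (Real.cosh (a * z + b) / Real.sinh (a * z + b))) (v1 y) y := by
    intro y hy
    have hs0 := hsne y hy
    have h := ((hcosh y).div (hsinh y) hs0).const_mul (-(2 * a * d / χ))
    convert h using 1
    · rfl
    · rfl
    · rfl
    rw [hv1]
    have hss := hcsq y
    field_simp
    linear_combination (-(a ^ 2)) * hss
  -- first derivatives
  have hderu : ∀ y : ℝ, a * y + b ≠ 0 →
      deriv (fun z => 1 / Real.sinh (a * z + b) ^ 2) y = u1 y :=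
    fun y hy => (hU y hy).deriv
  have hderv : ∀ y : ℝ, a * y + b ≠ 0 →
      deriv (fun z => -(2 * a * d / χ) *
        (Real.cosh (a * z + b) / Real.sinh (a * z + b))) y = v1 y :=
    fun y hy => (hV y hy).deriv
  intro x hx
  have hs0 := hsne x hx
  set s := Real.sinh (a * x + b) with hs
  set c := Real.cosh (a * x + b) with hc
  have hcs : c ^ 2 = s ^ 2 + 1 := hcsq x
  -- eventual equality of derivatives near x
  have hmem : {y : ℝ | a * y + b ≠ 0} ∈ nhds x := by
    have hcont : Continuous fun y : ℝ => a * y + b := by continuity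
    have : IsOpen {y : ℝ | a * y + b ≠ 0} := isOpen_ne.preimage hcont
    exact this.mem_nhds hx
  have hequ : deriv (fun z => 1 / Real.sinh (a * z + b) ^ 2) =ᶠ[nhds x] u1 :=
    Filter.eventuallyEq_of_mem hmem (fun y hy => hderu y hy)
  have heqv : deriv (fun z => -(2 * a * d / χ) *
      (Real.cosh (a * z + b) / Real.sinh (a * z + b))) =ᶠ[nhds x] v1 :=
    Filter.eventuallyEq_of_mem hmem (fun y hy => hderv y hy)
  -- second derivatives
  have hU2 : HasDerivAt u1
      ((-(2 * a) * (s * a) * s ^ 3 - -(2 * a) * c * (3 * s ^ 2 * (c * a))) / (s ^ 3) ^ 2) x := by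
    have h := ((hcosh x).const_mul (-(2 * a))).div ((hsinh x).pow 3) (pow_ne_zero 3 hs0)
    convert h using 1
    · rfl
    · rfl
    · rfl
    push_cast; simp only [Pi.pow_apply, ← hs, ← hc]
  have hV2 : HasDerivAt v1
      ((0 * s ^ 2 - 2 * a ^ 2 * d / χ * (2 * s ^ 1 * (c * a))) / (s ^ 2) ^ 2) x := by
    have h := (hasDerivAt_const x (2 * a ^ 2 * d / χ)).div ((hsinh x).pow 2) (pow_ne_zero 2 hs0)
    convert h using 1
    · rfl
    · rfl
    · rfl
    push_cast; simp only [Pi.pow_apply, ← hs, ← hc]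
  have E2 : deriv (deriv (fun z => 1 / Real.sinh (a * z + b) ^ 2)) x =
      (-(2 * a) * (s * a) * s ^ 3 - -(2 * a) * c * (3 * s ^ 2 * (c * a))) / (s ^ 3) ^ 2 := by
    rw [hequ.deriv_eq]; exact hU2.deriv
  have E4 : deriv (deriv (fun z => -(2 * a * d / χ) *
      (Real.cosh (a * z + b) / Real.sinh (a * z + b)))) x =
      (0 * s ^ 2 - 2 * a ^ 2 * d / χ * (2 * s ^ 1 * (c * a))) / (s ^ 2) ^ 2 := by
    rw [heqv.deriv_eq]; exact hV2.deriv
  -- product derivative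
  have E5 : deriv (fun y => (1 / Real.sinh (a * y + b) ^ 2) *
      (-(2 * a * d / χ) * (Real.cosh (a * y + b) / Real.sinh (a * y + b)))) x =
      u1 x * (-(2 * a * d / χ) * (c / s)) + (1 / s ^ 2) * v1 x := by
    exact ((hU x hx).mul (hV x hx)).deriv
  have E1 : deriv (fun z => 1 / Real.sinh (a * z + b) ^ 2) x = u1 x := hderu x hx
  have E3 : deriv (fun z => -(2 * a * d / χ) *
      (Real.cosh (a * z + b) / Real.sinh (a * z + b))) x = v1 x := hderv x hx
  have ha' : a ^ 2 * (2 * d * ε * (2 * d + χ)) = μ * χ ^ 2 := by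
    have hne : 2 * d * ε * (2 * d + χ) ≠ 0 := by positivity
    field_simp at ha
    linarith [ha]
  constructor
  · rw [E2, E5, hu1, hv1]
    simp only
    rw [show Real.sinh (a*x+b) = s from rfl, show Real.cosh (a*x+b) = c from rfl]
    field_simp
    linear_combination (2 * a ^ 2 * d) * hcs
  · rw [E4, E3, E1, hu1, hv1]
    simp only
    rw [show Real.sinh (a*x+b) = s from rfl, show Real.cosh (a*x+b) = c from rfl]
    field_simp
    linear_combination (-(2 * a * c)) * ha'
end

section
/- Let d, ε, χ, μ be positive real numbers, let a ≠ 0 and b be real numbers, and define ū(x) := 1/cos(a·x + b)², v̄(x) := (2ad/χ)·tan(a·x + b). Suppose there exists x₀ ∈ ℝ with cos(a·x₀ + b) ≠ 0 and sin(a·x₀ + b) ≠ 0 such that ε·v̄″(x₀) + 2ε·v̄(x₀)·v̄′(x₀) − μ·ū′(x₀) = 0. Then a² = μχ²/(2dε(2d+χ)). -/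
open Real Filter Topology

lemma aff_deriv (a b x : ℝ) : HasDerivAt (fun x : ℝ => a * x + b) a x := by
  simpa using ((hasDerivAt_id x).const_mul a).add_const b

lemma inv_cos_sq_deriv (a b x : ℝ) (hx : Real.cos (a * x + b) ≠ 0) :
    HasDerivAt (fun x => (Real.cos (a * x + b) ^ 2)⁻¹)
      (2 * a * Real.sin (a * x + b) / Real.cos (a * x + b) ^ 3) x := by
  have h1 : HasDerivAt (fun x => Real.cos (a * x + b)) (-Real.sin (a * x + b) * a) x :=
    by have := (Real.hasDerivAt_cos (a * x + b)).comp x (aff_deriv a b x); exact this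
  have h2 := (h1.pow 2).inv (pow_ne_zero 2 hx)
  refine h2.congr_deriv ?_
  field_simp
  simp only [Pi.pow_apply]
  ring

lemma vbar_deriv (a b d χ x : ℝ) (hx : Real.cos (a * x + b) ≠ 0) :
    HasDerivAt (fun x => (2 * a * d / χ) * Real.tan (a * x + b))
      ((2 * a ^ 2 * d / χ) * (Real.cos (a * x + b) ^ 2)⁻¹) x := by
  have h1 : HasDerivAt (fun x => Real.tan (a * x + b)) (1 / Real.cos (a * x + b) ^ 2 * a) x :=
    by have := (Real.hasDerivAt_tan hx).comp x (aff_deriv a b x); exact this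
  refine (h1.const_mul (2 * a * d / χ)).congr_deriv ?_
  field_simp

/-- The secant/tangent ansatz solves the second steady-state equation only for
the amplitude value `a² = μχ²/(2dε(2d+χ))`. -/
theorem stmt_5 (d ε χ μ : ℝ) (hd : 0 < d) (hε : 0 < ε) (hχ : 0 < χ) (hμ : 0 < μ)
    (a b : ℝ) (ha : a ≠ 0)
    (ubar vbar : ℝ → ℝ)
    (hu : ubar = fun x => 1 / Real.cos (a * x + b) ^ 2)
    (hv : vbar = fun x => (2 * a * d / χ) * Real.tan (a * x + b))
    (x₀ : ℝ) (hcos : Real.cos (a * x₀ + b) ≠ 0) (hsin : Real.sin (a * x₀ + b) ≠ 0)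
    (heq : ε * deriv (deriv vbar) x₀ + 2 * ε * vbar x₀ * deriv vbar x₀
      - μ * deriv ubar x₀ = 0) :
    a ^ 2 = μ * χ ^ 2 / (2 * d * ε * (2 * d + χ)) := by
  set c := Real.cos (a * x₀ + b) with hc
  set s := Real.sin (a * x₀ + b) with hs
  -- first derivative of vbar near x₀
  have hnb : ∀ᶠ x in 𝓝 x₀, Real.cos (a * x + b) ≠ 0 := by
    have hcont : ContinuousAt (fun x => Real.cos (a * x + b)) x₀ := by fun_prop
    exact hcont.eventually_ne hcos
  have hg : deriv vbar =ᶠ[𝓝 x₀] fun x => (2 * a ^ 2 * d / χ) * (Real.cos (a * x + b) ^ 2)⁻¹ := by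
    filter_upwards [hnb] with x hx
    rw [hv]
    exact (vbar_deriv a b d χ x hx).deriv
  have hDv : deriv vbar x₀ = (2 * a ^ 2 * d / χ) * (c ^ 2)⁻¹ := hg.self_of_nhds
  have hDDv : deriv (deriv vbar) x₀ = (2 * a ^ 2 * d / χ) * (2 * a * s / c ^ 3) := by
    rw [hg.deriv_eq]
    exact (((inv_cos_sq_deriv a b x₀ hcos).const_mul (2 * a ^ 2 * d / χ))).deriv
  have hDu : deriv ubar x₀ = 2 * a * s / c ^ 3 := by
    have : ubar = fun x => (Real.cos (a * x + b) ^ 2)⁻¹ := by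
      rw [hu]; funext x; rw [one_div]
    rw [this]
    exact (inv_cos_sq_deriv a b x₀ hcos).deriv
  rw [hDDv, hDv, hDu, hv] at heq
  simp only [Real.tan_eq_sin_div_cos, ← hc, ← hs] at heq
  have hc3 : c ^ 3 ≠ 0 := pow_ne_zero 3 hcos
  field_simp at heq
  have key : a ^ 2 * (2 * d * ε * (2 * d + χ)) = μ * χ ^ 2 := by
    have h2as : (2 * a * s) ≠ 0 := by positivity
    have hne : (χ * c ^ 6 * (2 * a * s)) ≠ 0 :=
      mul_ne_zero (mul_ne_zero hχ.ne' (pow_ne_zero 6 hcos)) h2as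
    have h0 : (χ * c ^ 6 * (2 * a * s)) * (a ^ 2 * (2 * d * ε * (2 * d + χ)) - μ * χ ^ 2) = 0 := by
      linear_combination (χ * c ^ 6) * heq
    have := (mul_eq_zero.mp h0).resolve_left hne
    linarith
  rw [eq_div_iff (by positivity)]
  exact key
end

section
/- Let d, ε, χ, μ be positive real numbers, let a ≠ 0 and b be real numbers, and define ū(x) := 1/sinh(a·x + b)², v̄(x) := −(2ad/χ)·cosh(a·x + b)/sinh(a·x + b). Suppose there exists x₀ ∈ ℝ with a·x₀ + b ≠ 0 such that ε·v̄″(x₀) + 2ε·v̄(x₀)·v̄′(x₀) − μ·ū′(x₀) = 0. Then a² = μχ²/(2dε(2d+χ)). -/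
private lemma haff (a b x : ℝ) : HasDerivAt (fun x => a * x + b) a x := by
  simpa using ((hasDerivAt_id x).const_mul a).add_const b

private lemma hcoth (a b : ℝ) {x : ℝ} (hs : Real.sinh (a * x + b) ≠ 0) :
    HasDerivAt (fun x => Real.cosh (a * x + b) / Real.sinh (a * x + b))
      (-(a / Real.sinh (a * x + b) ^ 2)) x := by
  have hc : HasDerivAt (fun x => Real.cosh (a * x + b)) (Real.sinh (a*x+b) * a) x :=
    (Real.hasDerivAt_cosh _).comp x (haff a b x)
  have hsd : HasDerivAt (fun x => Real.sinh (a * x + b)) (Real.cosh (a*x+b) * a) x :=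
    (Real.hasDerivAt_sinh _).comp x (haff a b x)
  have := hc.fun_div hsd hs
  refine this.congr_deriv (Eq.symm ?_)
  have h1 : Real.cosh (a*x+b) ^ 2 - Real.sinh (a*x+b) ^ 2 = 1 :=
    Real.cosh_sq_sub_sinh_sq _
  field_simp
  linear_combination a * h1

private lemma hcsch2 (a b : ℝ) {x : ℝ} (hs : Real.sinh (a * x + b) ≠ 0) :
    HasDerivAt (fun x => 1 / Real.sinh (a * x + b) ^ 2)
      (-(2 * a * Real.cosh (a * x + b) / Real.sinh (a * x + b) ^ 3)) x := by
  have hsd : HasDerivAt (fun x => Real.sinh (a * x + b)) (Real.cosh (a*x+b) * a) x :=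
    (Real.hasDerivAt_sinh _).comp x (haff a b x)
  have hsq : HasDerivAt (fun x => Real.sinh (a * x + b) ^ 2)
      (2 * Real.sinh (a*x+b) * (Real.cosh (a*x+b) * a)) x := by
    simpa using (hsd.fun_pow 2)
  have hne : Real.sinh (a*x+b) ^ 2 ≠ 0 := pow_ne_zero _ hs
  have := (hasDerivAt_const x (1:ℝ)).fun_div hsq hne
  refine this.congr_deriv (Eq.symm ?_)
  field_simp
  ring

/-- The hyperbolic ansatz solves the second steady-state equation only for the
amplitude value `a² = μχ²/(2dε(2d+χ))`. -/
theorem stmt_6 (d ε χ μ : ℝ) (hd : 0 < d) (hε : 0 < ε) (hχ : 0 < χ) (hμ : 0 < μ)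
    (a b : ℝ) (ha : a ≠ 0)
    (ubar vbar : ℝ → ℝ)
    (hu : ubar = fun x => 1 / Real.sinh (a * x + b) ^ 2)
    (hv : vbar = fun x =>
      -(2 * a * d / χ) * (Real.cosh (a * x + b) / Real.sinh (a * x + b)))
    (x₀ : ℝ) (hx₀ : a * x₀ + b ≠ 0)
    (heq : ε * deriv (deriv vbar) x₀ + 2 * ε * vbar x₀ * deriv vbar x₀
      - μ * deriv ubar x₀ = 0) :
    a ^ 2 = μ * χ ^ 2 / (2 * d * ε * (2 * d + χ)) := by
  set s := Real.sinh (a * x₀ + b) with hs_def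
  set c := Real.cosh (a * x₀ + b) with hc_def
  have hs : s ≠ 0 := fun h => hx₀ (Real.sinh_eq_zero.mp h)
  have hc : 0 < c := Real.cosh_pos _
  -- derivative of vbar on the open set where sinh ≠ 0
  have hvd : ∀ x, Real.sinh (a * x + b) ≠ 0 →
      HasDerivAt vbar (2 * a ^ 2 * d / χ * (1 / Real.sinh (a * x + b) ^ 2)) x := by
    intro x hx
    rw [hv]
    have := (hcoth a b hx).const_mul (-(2 * a * d / χ))
    refine this.congr_deriv (Eq.symm ?_)
    field_simp
  -- the set is open, x₀ in it
  have hopen : IsOpen {x : ℝ | Real.sinh (a * x + b) ≠ 0} := by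
    have : Continuous fun x : ℝ => Real.sinh (a * x + b) :=
      Real.continuous_sinh.comp ((continuous_const.mul continuous_id).add continuous_const)
    exact isOpen_ne.preimage this
  have hmem : x₀ ∈ {x : ℝ | Real.sinh (a * x + b) ≠ 0} := hs
  have hev : ∀ᶠ x in nhds x₀, deriv vbar x
      = 2 * a ^ 2 * d / χ * (1 / Real.sinh (a * x + b) ^ 2) := by
    filter_upwards [hopen.mem_nhds hmem] with x hx
    exact (hvd x hx).deriv
  have hd2 : deriv (deriv vbar) x₀
      = 2 * a ^ 2 * d / χ * (-(2 * a * c / s ^ 3)) := by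
    rw [Filter.EventuallyEq.deriv_eq hev]
    exact (((hcsch2 a b hs).const_mul (2 * a ^ 2 * d / χ)).deriv)
  have hd1 : deriv vbar x₀ = 2 * a ^ 2 * d / χ * (1 / s ^ 2) := (hvd x₀ hs).deriv
  have hdu : deriv ubar x₀ = -(2 * a * c / s ^ 3) := by
    rw [hu]; exact (hcsch2 a b hs).deriv
  rw [hd2, hd1, hdu, hv] at heq
  simp only at heq
  have hsq : c ^ 2 - s ^ 2 = 1 := Real.cosh_sq_sub_sinh_sq _
  have hχ' : χ ≠ 0 := ne_of_gt hχ
  have key : c * a * (μ * χ ^ 2 - 2 * ε * a ^ 2 * d * (2 * d + χ)) = 0 := by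
    field_simp at heq
    rw [← hs_def, ← hc_def] at heq
    have h6 : (2 * χ * s ^ 6) ≠ 0 := by
      exact mul_ne_zero (mul_ne_zero two_ne_zero hχ') (pow_ne_zero _ hs)
    apply mul_left_cancel₀ h6
    linear_combination χ * s ^ 5 * heq
  have hca : c * a ≠ 0 := mul_ne_zero (ne_of_gt hc) ha
  have key2 : μ * χ ^ 2 = 2 * ε * a ^ 2 * d * (2 * d + χ) := by
    have := (mul_eq_zero.mp key).resolve_left hca
    linarith
  have hden : 2 * d * ε * (2 * d + χ) ≠ 0 := by positivity
  field_simp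
  linarith [key2]
end

section
/- Let d, ε, χ, μ be positive real numbers with 3χ ≤ 2d, let a := √(μχ²/(2dε(2d+χ))) and b > 0. Define ū(x) := (a·x + b)⁻² and v̄(x) := −(2ad/χ)·(a·x + b)⁻¹. Then for every x ∈ [0,1], ū″(x)/2 − 2·v̄(x)·ū′(x) + (ū·v̄)′(x) ≤ 0. -/
/-- For the power-type steady state with `3χ ≤ 2d`, the stability quantity
`𝔏 = ū″/2 - 2v̄ū′ + (ūv̄)′` is non-positive on `[0,1]`. -/
theorem stmt_8 (d ε χ μ : ℝ) (hd : 0 < d) (hε : 0 < ε) (hχ : 0 < χ) (hμ : 0 < μ)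
    (hcond : 3 * χ ≤ 2 * d)
    (a : ℝ) (ha : a = Real.sqrt (μ * χ ^ 2 / (2 * d * ε * (2 * d + χ))))
    (b : ℝ) (hb : 0 < b)
    (ubar vbar : ℝ → ℝ)
    (hu : ubar = fun x => ((a * x + b) ^ 2)⁻¹)
    (hv : vbar = fun x => -(2 * a * d / χ) * (a * x + b)⁻¹) :
    ∀ x ∈ Set.Icc (0 : ℝ) 1,
      deriv (deriv ubar) x / 2 - 2 * vbar x * deriv ubar x
        + deriv (fun y => ubar y * vbar y) x ≤ 0 := by
  have ha0 : 0 ≤ a := ha ▸ Real.sqrt_nonneg _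
  subst hu hv
  intro x hx
  obtain ⟨hx0, hx1⟩ := hx
  have hlin : ∀ y : ℝ, HasDerivAt (fun y => a * y + b) a y := by
    intro y
    simpa using ((hasDerivAt_id y).const_mul a).add_const b
  have hU : IsOpen {y : ℝ | 0 < a * y + b} :=
    isOpen_lt continuous_const ((continuous_const.mul continuous_id).add continuous_const)
  have hxU : (0:ℝ) < a * x + b := by positivity
  -- first derivative of ubar on U
  have hder1 : ∀ y : ℝ, 0 < a * y + b →
      HasDerivAt (fun y => ((a * y + b) ^ 2)⁻¹) (-2 * a * ((a * y + b) ^ 3)⁻¹) y := by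
    intro y hy
    have h2 := ((hlin y).pow 2).inv (pow_ne_zero _ (ne_of_gt hy))
    refine h2.congr_deriv ?_
    norm_num
    field_simp
  have hEq : deriv (fun y => ((a * y + b) ^ 2)⁻¹)
      =ᶠ[nhds x] fun y => -2 * a * ((a * y + b) ^ 3)⁻¹ := by
    filter_upwards [hU.mem_nhds hxU] with y hy
    exact (hder1 y hy).deriv
  -- second derivative
  have hder2 : HasDerivAt (fun y => -2 * a * ((a * y + b) ^ 3)⁻¹)
      (6 * a ^ 2 * ((a * x + b) ^ 4)⁻¹) x := by
    have h3 := (((hlin x).pow 3).inv (pow_ne_zero _ (ne_of_gt hxU))).const_mul (-2 * a)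
    refine h3.congr_deriv ?_
    norm_num
    field_simp
    ring
  have hdd : deriv (deriv (fun y => ((a * y + b) ^ 2)⁻¹)) x
      = 6 * a ^ 2 * ((a * x + b) ^ 4)⁻¹ := by
    rw [hEq.deriv_eq]
    exact hder2.deriv
  have hd1 : deriv (fun y => ((a * y + b) ^ 2)⁻¹) x = -2 * a * ((a * x + b) ^ 3)⁻¹ :=
    (hder1 x hxU).deriv
  -- derivative of vbar
  have hdv : HasDerivAt (fun y => -(2 * a * d / χ) * (a * y + b)⁻¹)
      (2 * a ^ 2 * d / χ * ((a * x + b) ^ 2)⁻¹) x := by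
    have h := ((hlin x).inv (ne_of_gt hxU)).const_mul (-(2 * a * d / χ))
    refine h.congr_deriv ?_
    field_simp
  -- derivative of product
  have hprod : deriv (fun y => ((a * y + b) ^ 2)⁻¹ * (-(2 * a * d / χ) * (a * y + b)⁻¹)) x
      = -2 * a * ((a * x + b) ^ 3)⁻¹ * (-(2 * a * d / χ) * (a * x + b)⁻¹)
        + ((a * x + b) ^ 2)⁻¹ * (2 * a ^ 2 * d / χ * ((a * x + b) ^ 2)⁻¹) :=
    ((hder1 x hxU).mul hdv).deriv
  rw [hdd, hd1, hprod]
  have key : 6 * a ^ 2 * ((a * x + b) ^ 4)⁻¹ / 2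
      - 2 * (-(2 * a * d / χ) * (a * x + b)⁻¹) * (-2 * a * ((a * x + b) ^ 3)⁻¹)
      + (-2 * a * ((a * x + b) ^ 3)⁻¹ * (-(2 * a * d / χ) * (a * x + b)⁻¹)
        + ((a * x + b) ^ 2)⁻¹ * (2 * a ^ 2 * d / χ * ((a * x + b) ^ 2)⁻¹))
      = a ^ 2 * (3 * χ - 2 * d) / (χ * (a * x + b) ^ 4) := by
    field_simp
    ring
  rw [key]
  apply div_nonpos_of_nonpos_of_nonneg
  · have : 3 * χ - 2 * d ≤ 0 := by linarith
    exact mul_nonpos_of_nonneg_of_nonpos (by positivity) this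
  · positivity
end

section
/- Let d, ε, χ, μ be positive real numbers with 3χ < 2d, let a := √(μχ²/(2dε(2d+χ))), and let b > 0 satisfy a + b < π/2 and 1/cos(b)² ≥ (4d − 2χ)/(2d − 3χ). Define ū(x) := 1/cos(a·x + b)² and v̄(x) := (2ad/χ)·tan(a·x + b). Then for every x ∈ [0,1], ū″(x)/2 − 2·v̄(x)·ū′(x) + (ū·v̄)′(x) ≤ 0. -/
lemma hasDerivAt_aff (a b y : ℝ) : HasDerivAt (fun x : ℝ => a * x + b) a y := by
  simpa using ((hasDerivAt_id y).const_mul a).add_const b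

lemma hasDerivAt_u (a b y : ℝ) (hc : Real.cos (a * y + b) ≠ 0) :
    HasDerivAt (fun x => 1 / Real.cos (a * x + b) ^ 2)
      (2 * a * Real.sin (a * y + b) / Real.cos (a * y + b) ^ 3) y := by
  have h1 := hasDerivAt_aff a b y
  have h2 : HasDerivAt (fun x => Real.cos (a * x + b))
      (-Real.sin (a * y + b) * a) y := (Real.hasDerivAt_cos _).comp y h1
  have h3 : HasDerivAt (fun x => Real.cos (a * x + b) ^ 2)
      (2 * Real.cos (a * y + b) ^ 1 * (-Real.sin (a * y + b) * a)) y := h2.pow 2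
  have h4 : Real.cos (a * y + b) ^ 2 ≠ 0 := pow_ne_zero _ hc
  have h5 : HasDerivAt (fun x => (Real.cos (a * x + b) ^ 2)⁻¹) _ y := h3.inv h4
  have : (fun x => (Real.cos (a * x + b) ^ 2)⁻¹)
      = fun x => 1 / Real.cos (a * x + b) ^ 2 := by
    funext x; rw [one_div]
  rw [this] at h5
  convert h5 using 1
  field_simp

lemma hasDerivAt_u' (a b y : ℝ) (hc : Real.cos (a * y + b) ≠ 0) :
    HasDerivAt (fun x => 2 * a * Real.sin (a * x + b) / Real.cos (a * x + b) ^ 3)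
      (2 * a ^ 2 * (Real.cos (a * y + b) ^ 2 + 3 * Real.sin (a * y + b) ^ 2)
        / Real.cos (a * y + b) ^ 4) y := by
  have h1 := hasDerivAt_aff a b y
  have hn : HasDerivAt (fun x => 2 * a * Real.sin (a * x + b))
      (2 * a * (Real.cos (a * y + b) * a)) y :=
    (((Real.hasDerivAt_sin _).comp y h1)).const_mul (2 * a)
  have hc2 : HasDerivAt (fun x => Real.cos (a * x + b))
      (-Real.sin (a * y + b) * a) y := (Real.hasDerivAt_cos _).comp y h1
  have hdden : HasDerivAt (fun x => Real.cos (a * x + b) ^ 3)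
      (3 * Real.cos (a * y + b) ^ 2 * (-Real.sin (a * y + b) * a)) y := hc2.pow 3
  have h3 : Real.cos (a * y + b) ^ 3 ≠ 0 := pow_ne_zero _ hc
  have h5 := hn.div hdden h3
  refine h5.congr_deriv ?_
  have hsc := Real.sin_sq_add_cos_sq (a * y + b)
  field_simp
  nlinarith [hsc, sq_nonneg (Real.cos (a*y+b)), sq_nonneg a]

lemma hasDerivAt_v (k a b y : ℝ) (hc : Real.cos (a * y + b) ≠ 0) :
    HasDerivAt (fun x => k * Real.tan (a * x + b))
      (k * a / Real.cos (a * y + b) ^ 2) y := by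
  have h1 := hasDerivAt_aff a b y
  have h2 : HasDerivAt (fun x => Real.tan (a * x + b))
      (1 / Real.cos (a * y + b) ^ 2 * a) y := by have := (Real.hasDerivAt_tan hc).comp y h1; exact this
  have := h2.const_mul k
  refine this.congr_deriv ?_
  field_simp

set_option maxHeartbeats 1000000 in
/-- For the secant-type steady state with `3χ < 2d` and
`sec²(b) ≥ (4d-2χ)/(2d-3χ)`, the stability quantity
`𝔏 = ū″/2 - 2v̄ū′ + (ūv̄)′` is non-positive on `[0,1]`. -/
theorem stmt_9 (d ε χ μ : ℝ) (hd : 0 < d) (hε : 0 < ε) (hχ : 0 < χ) (hμ : 0 < μ)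
    (hcond : 3 * χ < 2 * d)
    (a : ℝ) (ha : a = Real.sqrt (μ * χ ^ 2 / (2 * d * ε * (2 * d + χ))))
    (b : ℝ) (hb : 0 < b) (hab : a + b < Real.pi / 2)
    (hbd : 1 / Real.cos b ^ 2 ≥ (4 * d - 2 * χ) / (2 * d - 3 * χ))
    (ubar vbar : ℝ → ℝ)
    (hu : ubar = fun x => 1 / Real.cos (a * x + b) ^ 2)
    (hv : vbar = fun x => (2 * a * d / χ) * Real.tan (a * x + b)) :
    ∀ x ∈ Set.Icc (0 : ℝ) 1,
      deriv (deriv ubar) x / 2 - 2 * vbar x * deriv ubar x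
        + deriv (fun y => ubar y * vbar y) x ≤ 0 := by
  have ha0 : 0 ≤ a := ha ▸ Real.sqrt_nonneg _
  intro x hx
  obtain ⟨hx0, hx1⟩ := hx
  set θ := a * x + b with hθdef
  have hθ1 : 0 < θ := by
    have := mul_nonneg ha0 hx0
    simp only [hθdef]; linarith
  have hθle : θ ≤ a + b := by
    have : a * x ≤ a := by nlinarith
    simp only [hθdef]; linarith
  have hθ2 : θ < Real.pi / 2 := lt_of_le_of_lt hθle hab
  have hc : 0 < Real.cos θ := Real.cos_pos_of_mem_Ioo
    ⟨by linarith [Real.pi_pos], hθ2⟩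
  have hcne : Real.cos θ ≠ 0 := hc.ne'
  have hs : 0 ≤ Real.sin θ := Real.sin_nonneg_of_nonneg_of_le_pi hθ1.le
    (by linarith [Real.pi_pos, hθ2])
  -- derivative of ubar near x
  have hopen : IsOpen {y : ℝ | Real.cos (a * y + b) ≠ 0} := by
    have hcont : Continuous fun y : ℝ => Real.cos (a * y + b) :=
      Real.continuous_cos.comp ((continuous_const.mul continuous_id).add continuous_const)
    exact isOpen_compl_singleton.preimage hcont
  have hmem : x ∈ {y : ℝ | Real.cos (a * y + b) ≠ 0} := hcne
  have hev : deriv ubar =ᶠ[nhds x]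
      fun y => 2 * a * Real.sin (a * y + b) / Real.cos (a * y + b) ^ 3 := by
    filter_upwards [hopen.mem_nhds hmem] with y hy
    rw [hu]
    exact (hasDerivAt_u a b y hy).deriv
  have hdu : deriv ubar x = 2 * a * Real.sin θ / Real.cos θ ^ 3 := by
    rw [hu]; exact (hasDerivAt_u a b x hcne).deriv
  have hddu : deriv (deriv ubar) x
      = 2 * a ^ 2 * (Real.cos θ ^ 2 + 3 * Real.sin θ ^ 2) / Real.cos θ ^ 4 := by
    rw [hev.deriv_eq]
    exact (hasDerivAt_u' a b x hcne).deriv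
  have hdp : deriv (fun y => ubar y * vbar y) x
      = 2 * a * Real.sin θ / Real.cos θ ^ 3 * ((2 * a * d / χ) * Real.tan θ)
        + (1 / Real.cos θ ^ 2) * ((2 * a * d / χ) * a / Real.cos θ ^ 2) := by
    subst hu hv
    exact ((hasDerivAt_u a b x hcne).mul (hasDerivAt_v (2*a*d/χ) a b x hcne)).deriv
  rw [hddu, hdu, hdp, hv]
  simp only
  rw [Real.tan_eq_sin_div_cos]
  set c := Real.cos θ
  set s := Real.sin θ
  have hsc : s ^ 2 + c ^ 2 = 1 := Real.sin_sq_add_cos_sq θ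
  -- bound on c²
  have hcb : 0 < Real.cos b := Real.cos_pos_of_mem_Ioo
    ⟨by linarith [Real.pi_pos], by linarith⟩
  have hcle : c ≤ Real.cos b := by
    apply Real.cos_le_cos_of_nonneg_of_le_pi hb.le
      (by linarith [Real.pi_pos, hθ2])
    simp only [hθdef]; nlinarith
  have hc2le : c ^ 2 ≤ Real.cos b ^ 2 := by nlinarith
  have h2d3χ : 0 < 2 * d - 3 * χ := by linarith
  have hkey : (4 * d - 2 * χ) * Real.cos b ^ 2 ≤ 2 * d - 3 * χ := by
    have h := (div_le_div_iff₀ h2d3χ (by positivity : (0:ℝ) < Real.cos b ^ 2)).mp hbd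
    linarith
  have hbrk : (4 * d - 2 * χ) * c ^ 2 + (3 * χ - 2 * d) ≤ 0 := by
    have h4d : 0 ≤ 4 * d - 2 * χ := by linarith
    have := mul_le_mul_of_nonneg_left hc2le h4d
    linarith
  have heq : 2 * a ^ 2 * (c ^ 2 + 3 * s ^ 2) / c ^ 4 / 2
      - 2 * (2 * a * d / χ * (s / c)) * (2 * a * s / c ^ 3)
      + (2 * a * s / c ^ 3 * (2 * a * d / χ * (s / c))
        + 1 / c ^ 2 * (2 * a * d / χ * a / c ^ 2))
      = a ^ 2 / (χ * c ^ 4) * ((4 * d - 2 * χ) * c ^ 2 + (3 * χ - 2 * d)) := by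
    have : s ^ 2 = 1 - c ^ 2 := by linarith
    field_simp
    linear_combination ((3:ℝ)*χ - 4*d)*a^2 * this
  rw [heq]
  have hfac : 0 ≤ a ^ 2 / (χ * c ^ 4) := by positivity
  exact mul_nonpos_of_nonneg_of_nonpos hfac hbrk
end

section
/- Let d, ε, χ, μ be positive real numbers with 3χ < 2d, let a := √(μχ²/(2dε(2d+χ))), and let b > 0 satisfy a + b < π/2 and 1/sin(a + b)² ≥ (4d − 2χ)/(2d − 3χ). Define ū(x) := 1/sin(a·x + b)² and v̄(x) := −(2ad/χ)·cos(a·x + b)/sin(a·x + b). Then for every x ∈ [0,1], ū″(x)/2 − 2·v̄(x)·ū′(x) + (ū·v̄)′(x) ≤ 0. -/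
set_option maxHeartbeats 1000000


/-- For the cosecant-type steady state with `3χ < 2d` and
`csc²(a+b) ≥ (4d-2χ)/(2d-3χ)`, the stability quantity
`𝔏 = ū″/2 - 2v̄ū′ + (ūv̄)′` is non-positive on `[0,1]`. -/
theorem stmt_10 (d ε χ μ : ℝ) (hd : 0 < d) (hε : 0 < ε) (hχ : 0 < χ) (hμ : 0 < μ)
    (hcond : 3 * χ < 2 * d)
    (a : ℝ) (ha : a = Real.sqrt (μ * χ ^ 2 / (2 * d * ε * (2 * d + χ))))
    (b : ℝ) (hb : 0 < b) (hab : a + b < Real.pi / 2)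
    (hbd : 1 / Real.sin (a + b) ^ 2 ≥ (4 * d - 2 * χ) / (2 * d - 3 * χ))
    (ubar vbar : ℝ → ℝ)
    (hu : ubar = fun x => 1 / Real.sin (a * x + b) ^ 2)
    (hv : vbar = fun x =>
      -(2 * a * d / χ) * (Real.cos (a * x + b) / Real.sin (a * x + b))) :
    ∀ x ∈ Set.Icc (0 : ℝ) 1,
      deriv (deriv ubar) x / 2 - 2 * vbar x * deriv ubar x
        + deriv (fun y => ubar y * vbar y) x ≤ 0 := by
  subst hu hv
  have ha0 : 0 ≤ a := ha ▸ Real.sqrt_nonneg _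
  intro x hx
  obtain ⟨hx0, hx1⟩ := hx
  set s : ℝ → ℝ := fun y => Real.sin (a * y + b) with hs_def
  set c : ℝ → ℝ := fun y => Real.cos (a * y + b) with hc_def
  -- positivity of the angle and sine at x
  have hθ0 : 0 < a * x + b := by nlinarith
  have hθ1 : a * x + b ≤ a + b := by nlinarith
  have hθlt : a * x + b < Real.pi / 2 := lt_of_le_of_lt hθ1 hab
  have hSpos : 0 < s x := by
    have := Real.pi_pos
    exact Real.sin_pos_of_pos_of_lt_pi hθ0 (by linarith)
  have hSx : s x ≠ 0 := ne_of_gt hSpos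
  -- derivative lemmas
  have hlin : ∀ y : ℝ, HasDerivAt (fun z : ℝ => a * z + b) a y := by
    intro y
    simpa using ((hasDerivAt_id y).const_mul a).add_const b
  have hsin : ∀ y : ℝ, HasDerivAt s (a * c y) y := by
    intro y
    simpa [hs_def, hc_def, mul_comm, Function.comp_def] using
      (Real.hasDerivAt_sin (a * y + b)).comp y (hlin y)
  have hcos : ∀ y : ℝ, HasDerivAt c (-(a * s y)) y := by
    intro y
    have := (Real.hasDerivAt_cos (a * y + b)).comp y (hlin y)
    simpa [hs_def, hc_def, mul_comm, Function.comp_def] using this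
  -- first derivative of ubar
  have hU : ∀ y : ℝ, s y ≠ 0 →
      HasDerivAt (fun z => 1 / s z ^ 2) (-2 * a * c y / s y ^ 3) y := by
    intro y hy
    have h := (hasDerivAt_const y (1 : ℝ)).div ((hsin y).pow 2) (pow_ne_zero 2 hy)
    refine h.congr_deriv ?_
    simp only [Pi.pow_apply]
    field_simp
    ring
  -- s is continuous, so s ≠ 0 in a neighbourhood
  have hscont : Continuous s := by
    exact Real.continuous_sin.comp ((continuous_const.mul continuous_id).add continuous_const)
  have hUopen : IsOpen {y : ℝ | s y ≠ 0} :=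
    isOpen_compl_singleton.preimage hscont
  have hmem : {y : ℝ | s y ≠ 0} ∈ nhds x := hUopen.mem_nhds hSx
  have hev : deriv (fun z => 1 / s z ^ 2) =ᶠ[nhds x]
      fun y => -2 * a * c y / s y ^ 3 := by
    filter_upwards [hmem] with y hy
    exact (hU y hy).deriv
  -- second derivative of ubar
  have hU2 : HasDerivAt (fun y => -2 * a * c y / s y ^ 3)
      ((-2 * a * -(a * s x) * s x ^ 3 -
        -2 * a * c x * (3 * s x ^ (3 - 1) * (a * c x))) / (s x ^ 3) ^ 2) x := by
    exact ((hcos x).const_mul (-2 * a)).div ((hsin x).pow 3) (pow_ne_zero 3 hSx)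
  have hderiv2 : deriv (deriv fun z => 1 / s z ^ 2) x =
      (-2 * a * -(a * s x) * s x ^ 3 -
        -2 * a * c x * (3 * s x ^ (3 - 1) * (a * c x))) / (s x ^ 3) ^ 2 := by
    rw [hev.deriv_eq]
    exact hU2.deriv
  -- derivative of vbar
  have hV : HasDerivAt (fun y => -(2 * a * d / χ) * (c y / s y))
      (-(2 * a * d / χ) * ((-(a * s x) * s x - c x * (a * c x)) / s x ^ 2)) x :=
    ((hcos x).div (hsin x) hSx).const_mul _
  -- derivative of the product
  have hP : HasDerivAt (fun y => (1 / s y ^ 2) * (-(2 * a * d / χ) * (c y / s y)))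
      (-2 * a * c x / s x ^ 3 * (-(2 * a * d / χ) * (c x / s x)) +
        (1 / s x ^ 2) *
          (-(2 * a * d / χ) * ((-(a * s x) * s x - c x * (a * c x)) / s x ^ 2))) x :=
    (hU x hSx).mul hV
  rw [hderiv2, (hU x hSx).deriv, hP.deriv]
  -- key bound : s x ^ 2 * (4d - 2χ) ≤ 2d - 3χ
  have hsab : s x ≤ Real.sin (a + b) := by
    have hpi := Real.pi_pos
    apply Real.strictMonoOn_sin.monotoneOn
    · constructor <;> [linarith; linarith]
    · constructor <;> [linarith [hb, ha0]; linarith]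
    · exact hθ1
  have hsab2 : s x ^ 2 ≤ Real.sin (a + b) ^ 2 := by
    apply pow_le_pow_left₀ (le_of_lt hSpos) hsab
  have hd3 : 0 < 2 * d - 3 * χ := by linarith
  have hsabpos : 0 < Real.sin (a + b) := lt_of_lt_of_le hSpos hsab
  have hkey : s x ^ 2 * (4 * d - 2 * χ) ≤ 2 * d - 3 * χ := by
    rw [ge_iff_le, div_le_div_iff₀ hd3 (by positivity)] at hbd
    nlinarith [hsab2, hsabpos]
  have hC2 : c x ^ 2 = 1 - s x ^ 2 := by
    have := Real.sin_sq_add_cos_sq (a * x + b)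
    simp only [hs_def, hc_def] at *
    linarith
  -- now pure algebra
  have hrw : (-2 * a * -(a * s x) * s x ^ 3 -
        -2 * a * c x * (3 * s x ^ (3 - 1) * (a * c x))) / (s x ^ 3) ^ 2 / 2 -
      2 * (-(2 * a * d / χ) * (c x / s x)) * (-2 * a * c x / s x ^ 3) +
      (-2 * a * c x / s x ^ 3 * (-(2 * a * d / χ) * (c x / s x)) +
        1 / s x ^ 2 *
          (-(2 * a * d / χ) * ((-(a * s x) * s x - c x * (a * c x)) / s x ^ 2))) =
      a ^ 2 * (3 * χ - 2 * d + s x ^ 2 * (4 * d - 2 * χ)) / (χ * s x ^ 4) := by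
    have hχ0 : χ ≠ 0 := ne_of_gt hχ
    field_simp
    linear_combination (a ^ 2 * s x ^ 2 * (3 * χ - 2 * d)) * hC2
  rw [hrw]
  apply div_nonpos_of_nonpos_of_nonneg
  · nlinarith [sq_nonneg a, hkey]
  · positivity
end

section
/- Let d, ε, χ, μ be positive real numbers, let a := √(μχ²/(2dε(2d+χ))) and b > 0. Define ū(x) := 1/sinh(a·x + b)² and v̄(x) := −(2ad/χ)·cosh(a·x + b)/sinh(a·x + b). Assume either (i) 3χ ≤ 2d, or (ii) 2d < 3χ < 6d and 1/sinh(b)² ≤ (4d − 2χ)/(3χ − 2d). Then for every x ∈ [0,1], ū″(x)/2 − 2·v̄(x)·ū′(x) + (ū·v̄)′(x) ≤ 0. -/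
private lemma stmt_11_alg (a d χ s c : ℝ) (hχ : χ ≠ 0) (hs : s ≠ 0) (hc2 : c^2 = s^2+1) :
    (-2*a^2/s^2 + 6*a^2*c^2/s^4)/2 - 2*(-(2*a*d/χ)*(c/s))*(-2*a*c/s^3)
      + ((-2*a*c/s^3)*(-(2*a*d/χ)*(c/s)) + (1/s^2)*(2*a^2*d/χ/s^2))
      = a^2*((2*χ-4*d)*s^2+(3*χ-2*d))/(χ*s^4) := by
  field_simp
  linear_combination (a^2*(6*χ-8*d)) * hc2

set_option maxHeartbeats 1000000 in
/-- For the hyperbolic-type steady state, if either `3χ ≤ 2d`, or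
`2d < 3χ < 6d` and `csch²(b) ≤ (4d-2χ)/(3χ-2d)`, then the stability quantity
`𝔏 = ū″/2 - 2v̄ū′ + (ūv̄)′` is non-positive on `[0,1]`. -/
theorem stmt_11 (d ε χ μ : ℝ) (hd : 0 < d) (hε : 0 < ε) (hχ : 0 < χ) (hμ : 0 < μ)
    (a : ℝ) (ha : a = Real.sqrt (μ * χ ^ 2 / (2 * d * ε * (2 * d + χ))))
    (b : ℝ) (hb : 0 < b)
    (ubar vbar : ℝ → ℝ)
    (hu : ubar = fun x => 1 / Real.sinh (a * x + b) ^ 2)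
    (hv : vbar = fun x =>
      -(2 * a * d / χ) * (Real.cosh (a * x + b) / Real.sinh (a * x + b)))
    (hcond : 3 * χ ≤ 2 * d ∨
      (2 * d < 3 * χ ∧ 3 * χ < 6 * d ∧
        1 / Real.sinh b ^ 2 ≤ (4 * d - 2 * χ) / (3 * χ - 2 * d))) :
    ∀ x ∈ Set.Icc (0 : ℝ) 1,
      deriv (deriv ubar) x / 2 - 2 * vbar x * deriv ubar x
        + deriv (fun y => ubar y * vbar y) x ≤ 0 := by
  subst hu hv
  have ha0 : 0 ≤ a := ha ▸ Real.sqrt_nonneg _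
  intro x hx
  obtain ⟨hx0, hx1⟩ := hx
  set U : Set ℝ := {y | 0 < a * y + b} with hUdef
  have hUopen : IsOpen U := isOpen_lt continuous_const (by continuity)
  have hxU : x ∈ U := by
    have := mul_nonneg ha0 hx0
    simp only [hUdef, Set.mem_setOf_eq]; linarith
  set u1 : ℝ → ℝ := fun y => -2*a*Real.cosh (a*y+b)/Real.sinh (a*y+b)^3 with hu1def
  set u2 : ℝ → ℝ := fun y =>
    -2*a^2/Real.sinh (a*y+b)^2 + 6*a^2*Real.cosh (a*y+b)^2/Real.sinh (a*y+b)^4 with hu2def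
  set v1 : ℝ → ℝ := fun y => 2*a^2*d/χ/Real.sinh (a*y+b)^2 with hv1def
  have hlin : ∀ y : ℝ, HasDerivAt (fun z => a*z+b) a y := fun y => by
    simpa using ((hasDerivAt_id y).const_mul a).add_const b
  have hS : ∀ y : ℝ, HasDerivAt (fun z => Real.sinh (a*z+b)) (a * Real.cosh (a*y+b)) y :=
    fun y => by simpa [mul_comm, Function.comp_def] using (Real.hasDerivAt_sinh (a*y+b)).comp y (hlin y)
  have hC : ∀ y : ℝ, HasDerivAt (fun z => Real.cosh (a*z+b)) (a * Real.sinh (a*y+b)) y :=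
    fun y => by simpa [mul_comm, Function.comp_def] using (Real.hasDerivAt_cosh (a*y+b)).comp y (hlin y)
  have hspos : ∀ y ∈ U, 0 < Real.sinh (a*y+b) := fun y hy => Real.sinh_pos_iff.mpr hy
  have hu1 : ∀ y ∈ U, HasDerivAt (fun z => 1 / Real.sinh (a*z+b)^2) (u1 y) y := by
    intro y hy
    have hs := hspos y hy
    have h2 : HasDerivAt (fun z => Real.sinh (a*z+b)^2)
        ((2:ℕ) * Real.sinh (a*y+b)^1 * (a * Real.cosh (a*y+b))) y := (hS y).pow 2
    have h3 := h2.inv (by positivity)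
    have h4 : (fun z => 1 / Real.sinh (a*z+b)^2) = fun z => (Real.sinh (a*z+b)^2)⁻¹ := by
      funext z; rw [one_div]
    rw [h4]
    refine h3.congr_deriv (Eq.symm ?_)
    simp only [hu1def]
    push_cast
    field_simp
  have hu2 : ∀ y ∈ U, HasDerivAt u1 (u2 y) y := by
    intro y hy
    have hs := hspos y hy
    have hnum : HasDerivAt (fun z => -2*a*Real.cosh (a*z+b))
        (-2*a*(a * Real.sinh (a*y+b))) y := by
      simpa [mul_comm, mul_assoc, mul_left_comm] using (hC y).const_mul (-2*a)
    have hden : HasDerivAt (fun z => Real.sinh (a*z+b)^3)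
        ((3:ℕ) * Real.sinh (a*y+b)^2 * (a * Real.cosh (a*y+b))) y := (hS y).pow 3
    have h3 := hnum.div hden (by positivity)
    refine h3.congr_deriv (Eq.symm ?_)
    simp only [hu2def]
    push_cast
    field_simp
    ring
  have hv1 : ∀ y ∈ U, HasDerivAt
      (fun z => -(2 * a * d / χ) * (Real.cosh (a*z+b) / Real.sinh (a*z+b))) (v1 y) y := by
    intro y hy
    have hs := hspos y hy
    have hc2 : Real.cosh (a*y+b)^2 = Real.sinh (a*y+b)^2 + 1 := Real.cosh_sq _
    have hq := (hC y).div (hS y) (ne_of_gt hs)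
    have h3 := hq.const_mul (-(2 * a * d / χ))
    have hkey : a * Real.sinh (a*y+b) * Real.sinh (a*y+b)
        - Real.cosh (a*y+b) * (a * Real.cosh (a*y+b)) = -a := by
      linear_combination (-a) * hc2
    rw [hkey] at h3
    refine h3.congr_deriv (Eq.symm ?_)
    simp only [hv1def]
    field_simp
  -- derivative identities at x
  have hED : deriv (fun z => 1 / Real.sinh (a*z+b)^2) =ᶠ[nhds x] u1 := by
    filter_upwards [hUopen.mem_nhds hxU] with y hy
    exact (hu1 y hy).deriv
  have hD2 : deriv (deriv (fun z => 1 / Real.sinh (a*z+b)^2)) x = u2 x := by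
    rw [hED.deriv_eq]; exact (hu2 x hxU).deriv
  have hD1 : deriv (fun z => 1 / Real.sinh (a*z+b)^2) x = u1 x := (hu1 x hxU).deriv
  have hD3 : deriv (fun z => (1 / Real.sinh (a*z+b)^2) *
      (-(2 * a * d / χ) * (Real.cosh (a*z+b) / Real.sinh (a*z+b)))) x
      = u1 x * (-(2 * a * d / χ) * (Real.cosh (a*x+b) / Real.sinh (a*x+b)))
        + (1 / Real.sinh (a*x+b)^2) * v1 x := ((hu1 x hxU).mul (hv1 x hxU)).deriv
  have hs : 0 < Real.sinh (a*x+b) := hspos x hxU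
  have hc2 : Real.cosh (a*x+b)^2 = Real.sinh (a*x+b)^2 + 1 := Real.cosh_sq _
  have key : (2*χ-4*d)*Real.sinh (a*x+b)^2 + (3*χ-2*d) ≤ 0 := by
    rcases hcond with h | ⟨h1, h2, h3⟩
    · nlinarith [sq_nonneg (Real.sinh (a*x+b)), hs]
    · have hsb : 0 < Real.sinh b := Real.sinh_pos_iff.mpr hb
      have hmono : Real.sinh b ≤ Real.sinh (a*x+b) := by
        apply Real.sinh_le_sinh.mpr
        nlinarith [mul_nonneg ha0 hx0]
      have hsb2 : Real.sinh b ^ 2 ≤ Real.sinh (a*x+b) ^ 2 := by nlinarith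
      have h3' : 3*χ - 2*d ≤ (4*d - 2*χ) * Real.sinh b ^ 2 := by
        rw [div_le_div_iff₀ (by positivity) (by linarith)] at h3
        linarith
      nlinarith [mul_le_mul_of_nonneg_left hsb2 (by linarith : (0:ℝ) ≤ 4*d - 2*χ)]
  have hnum : a^2 * ((2*χ-4*d)*Real.sinh (a*x+b)^2 + (3*χ-2*d)) ≤ 0 :=
    mul_nonpos_of_nonneg_of_nonpos (sq_nonneg a) key
  have hrhs : a^2 * ((2*χ-4*d)*Real.sinh (a*x+b)^2 + (3*χ-2*d))
      / (χ * Real.sinh (a*x+b)^4) ≤ 0 :=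
    div_nonpos_iff.mpr (Or.inr ⟨hnum, by positivity⟩)
  have heq := stmt_11_alg a d χ (Real.sinh (a*x+b)) (Real.cosh (a*x+b))
    (ne_of_gt hχ) (ne_of_gt hs) hc2
  beta_reduce
  rw [hD2, hD1, hD3]
  simp only [hu1def, hu2def, hv1def]
  refine le_of_eq_of_le ?_ hrhs
  field_simp
  linear_combination (a^2*(6*χ-8*d)) * hc2
end

section
/- The function F : ℝ → ℝ defined by F(x) := arcsin(1/√x) − arsinh(1/√x) is strictly decreasing on the interval [1, ∞); in particular, for all x, y ≥ 1 with x < y one has F(y) < F(x), and F is injective on [1, ∞). -/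
lemma g_strictMono : StrictMonoOn (fun u : ℝ => Real.arcsin u - Real.arsinh u)
    (Set.Icc (0 : ℝ) 1) := by
  apply strictMonoOn_of_deriv_pos (convex_Icc 0 1)
  · exact (Real.continuous_arcsin.sub Real.continuous_arsinh).continuousOn
  · intro x hx
    rw [interior_Icc] at hx
    obtain ⟨h0, h1⟩ := hx
    have hne1 : x ≠ 1 := ne_of_lt h1
    have hnem1 : x ≠ -1 := by linarith
    have hd : HasDerivAt (fun u : ℝ => Real.arcsin u - Real.arsinh u)
        (1 / Real.sqrt (1 - x ^ 2) - (Real.sqrt (1 + x ^ 2))⁻¹) x :=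
      (Real.hasDerivAt_arcsin hnem1 hne1).sub (Real.hasDerivAt_arsinh x)
    rw [hd.deriv]
    have h1x : (0 : ℝ) < 1 - x ^ 2 := by nlinarith
    have h2x : (0 : ℝ) < 1 + x ^ 2 := by nlinarith
    have hs1 : 0 < Real.sqrt (1 - x ^ 2) := Real.sqrt_pos.2 h1x
    have hlt : Real.sqrt (1 - x ^ 2) < Real.sqrt (1 + x ^ 2) := by
      apply Real.sqrt_lt_sqrt h1x.le; nlinarith
    rw [one_div, sub_pos]
    exact inv_strictAnti₀ hs1 hlt

/-- The function `F(x) = arcsin(1/√x) - arsinh(1/√x)` is strictly decreasing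
on `[1, ∞)`; in particular it is injective there. -/
theorem stmt_12 (F : ℝ → ℝ)
    (hF : F = fun x => Real.arcsin (1 / Real.sqrt x) - Real.arsinh (1 / Real.sqrt x)) :
    StrictAntiOn F (Set.Ici (1 : ℝ)) ∧
    (∀ x y : ℝ, 1 ≤ x → 1 ≤ y → x < y → F y < F x) ∧
    Set.InjOn F (Set.Ici (1 : ℝ)) := by
  have key : StrictAntiOn F (Set.Ici (1 : ℝ)) := by
    intro x hx y hy hxy
    simp only [Set.mem_Ici] at hx hy
    have hsx : (1 : ℝ) ≤ Real.sqrt x := by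
      rw [show (1:ℝ) = Real.sqrt 1 by simp]; exact Real.sqrt_le_sqrt hx
    have hsy : (1 : ℝ) ≤ Real.sqrt y := by
      rw [show (1:ℝ) = Real.sqrt 1 by simp]; exact Real.sqrt_le_sqrt hy
    have hsxy : Real.sqrt x < Real.sqrt y :=
      Real.sqrt_lt_sqrt (by linarith) hxy
    have hux : 1 / Real.sqrt x ∈ Set.Icc (0 : ℝ) 1 := by
      constructor
      · positivity
      · rw [div_le_one (by linarith)]; exact hsx
    have huy : 1 / Real.sqrt y ∈ Set.Icc (0 : ℝ) 1 := by
      constructor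
      · positivity
      · rw [div_le_one (by linarith)]; exact hsy
    have huyx : 1 / Real.sqrt y < 1 / Real.sqrt x :=
      one_div_lt_one_div_of_lt (by linarith) hsxy
    have := g_strictMono huy hux huyx
    simpa [hF] using this
  exact ⟨key, fun x y hx hy hxy => key hx hy hxy, key.injOn⟩
end

section
/- There do not exist real numbers a, b, c with a > 0, 0 < b, a + b < π/2, and c > 0 such that 1/sin(b)² = 1/sinh(c)² and 1/sin(a + b)² = 1/sinh(a + c)². Equivalently, the cosecant-type steady state x ↦ csc²(a·x + b) on [0,1] with a·x + b ∈ (0, π/2) and the hyperbolic-type steady state x ↦ csch²(a·x + c) on [0,1] with c > 0, for the same amplitude a > 0, can never share both Dirichlet boundary values u(0) and u(1). -/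
/-- Mutual exclusivity of the cosecant-type and hyperbolic-type steady states:
they can never share both Dirichlet boundary values on `[0,1]`. -/
theorem stmt_13 :
    ¬ ∃ a b c : ℝ, 0 < a ∧ 0 < b ∧ a + b < Real.pi / 2 ∧ 0 < c ∧
      1 / Real.sin b ^ 2 = 1 / Real.sinh c ^ 2 ∧
      1 / Real.sin (a + b) ^ 2 = 1 / Real.sinh (a + c) ^ 2 := by
  rintro ⟨a, b, c, ha, hb, hab, hc, h1, h2⟩
  have hpi := Real.pi_pos
  have hbpi : b < Real.pi := by linarith
  have habpi : a + b < Real.pi := by linarith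
  have hapi : a < Real.pi := by linarith
  have hsb : 0 < Real.sin b := Real.sin_pos_of_pos_of_lt_pi hb hbpi
  have hsab : 0 < Real.sin (a + b) := Real.sin_pos_of_pos_of_lt_pi (by linarith) habpi
  have hsa : 0 < Real.sin a := Real.sin_pos_of_pos_of_lt_pi ha hapi
  have hshc : 0 < Real.sinh c := Real.sinh_pos_iff.mpr hc
  have hshac : 0 < Real.sinh (a + c) := Real.sinh_pos_iff.mpr (by linarith)
  have hsha : 0 < Real.sinh a := Real.sinh_pos_iff.mpr ha
  -- from the equations, equalities of the positive values
  have e1 : Real.sin b = Real.sinh c := by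
    field_simp at h1
    nlinarith [h1]
  have e2 : Real.sin (a + b) = Real.sinh (a + c) := by
    field_simp at h2
    nlinarith [h2]
  have hsinlt : Real.sin a < a := Real.sin_lt ha
  have hsinhgt : a < Real.sinh a := Real.self_lt_sinh_iff.mpr ha
  have hcosb : Real.cos b ≤ 1 := Real.cos_le_one b
  have hcosa : Real.cos a ≤ 1 := Real.cos_le_one a
  have hcoshc : 1 ≤ Real.cosh c := Real.one_le_cosh c
  have hcosha : 1 ≤ Real.cosh a := Real.one_le_cosh a
  have hadd : Real.sin (a + b) = Real.sin a * Real.cos b + Real.cos a * Real.sin b :=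
    Real.sin_add a b
  have hadd' : Real.sinh (a + c) = Real.sinh a * Real.cosh c + Real.cosh a * Real.sinh c :=
    Real.sinh_add a c
  nlinarith [mul_le_mul_of_nonneg_left hcosb hsa.le,
    mul_le_mul_of_nonneg_right hcosa hsb.le,
    mul_le_mul_of_nonneg_left hcoshc hsha.le,
    mul_le_mul_of_nonneg_right hcosha hshc.le]
end

section
/- Let d, ε, χ, μ be positive real numbers, a := √(μχ²/(2dε(2d+χ))), b ∈ ℝ, and set σ := −2dμ/(2d+χ). Define, for x with cos(a·x + b) > 0, ū(x) := cos(a·x + b)^(−2) and c̄(x) := cos(a·x + b)^(−2d/χ) (real power of the positive number cos(a·x+b)). Then for every x with cos(a·x + b) > 0: d·ū″(x) − χ·(ū·(log ∘ c̄)′)′(x) = 0 and ε·c̄″(x) − σ·c̄(x) − μ·ū(x)·c̄(x) = 0. In particular σ < 0. -/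
/-- The secant-type steady state of the original Keller–Segel system with
`m = 1` corresponds to a negative rate `σ = -2dμ/(2d+χ)`. -/
theorem stmt_16 (d ε χ μ : ℝ) (hd : 0 < d) (hε : 0 < ε) (hχ : 0 < χ) (hμ : 0 < μ)
    (a : ℝ) (ha : a = Real.sqrt (μ * χ ^ 2 / (2 * d * ε * (2 * d + χ))))
    (b : ℝ) (σ : ℝ) (hσ : σ = -(2 * d * μ) / (2 * d + χ))
    (ubar cbar : ℝ → ℝ)
    (hu : ubar = fun x => Real.cos (a * x + b) ^ (-2 : ℝ))
    (hc : cbar = fun x => Real.cos (a * x + b) ^ (-(2 * d / χ))) :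
    (∀ x : ℝ, 0 < Real.cos (a * x + b) →
      d * deriv (deriv ubar) x
        - χ * deriv (fun y => ubar y * deriv (fun z => Real.log (cbar z)) y) x = 0 ∧
      ε * deriv (deriv cbar) x - σ * cbar x - μ * ubar x * cbar x = 0) ∧
    σ < 0 := by
  have hdχ : (0:ℝ) < 2 * d + χ := by linarith
  have ha2 : a ^ 2 = μ * χ ^ 2 / (2 * d * ε * (2 * d + χ)) := by
    rw [ha, Real.sq_sqrt (by positivity)]
  set q : ℝ := -(2 * d / χ) with hq
  have hχq : χ * q = -(2 * d) := by rw [hq]; field_simp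
  have hlin : ∀ y : ℝ, HasDerivAt (fun z => a * z + b) a y := fun y => by
    simpa using ((hasDerivAt_id y).const_mul a).add_const b
  have hsin : ∀ y : ℝ, HasDerivAt (fun z => Real.sin (a * z + b))
      (Real.cos (a * y + b) * a) y :=
    fun y => (hlin y).sin
  have hcos : ∀ y : ℝ, HasDerivAt (fun z => Real.cos (a * z + b))
      (-Real.sin (a * y + b) * a) y :=
    fun y => (hlin y).cos
  have hder : ∀ (p y : ℝ), Real.cos (a * y + b) ≠ 0 →
      HasDerivAt (fun z => Real.cos (a * z + b) ^ p)
        (p * Real.cos (a * y + b) ^ (p - 1) * (-Real.sin (a * y + b) * a)) y := by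
    intro p y hy
    rw [show p * Real.cos (a * y + b) ^ (p - 1) * (-Real.sin (a * y + b) * a)
        = -Real.sin (a * y + b) * a * p * Real.cos (a * y + b) ^ (p - 1) by ring]
    exact (hcos y).rpow_const (Or.inl hy)
  constructor
  · intro x hx
    have hxne : Real.cos (a * x + b) ≠ 0 := ne_of_gt hx
    have hU : ∀ᶠ y in nhds x, 0 < Real.cos (a * y + b) := by
      have hcont : Continuous fun y => Real.cos (a * y + b) := by fun_prop
      exact hcont.continuousAt.eventually (eventually_gt_nhds hx)
    constructor
    · -- first equation
      have hu1 : deriv ubar =ᶠ[nhds x]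
          fun y => (-2 : ℝ) * Real.cos (a * y + b) ^ ((-2 : ℝ) - 1)
            * (-Real.sin (a * y + b) * a) := by
        filter_upwards [hU] with y hy
        rw [hu]
        exact (hder (-2) y hy.ne').deriv
      have hF : HasDerivAt
          (fun y => (-2 : ℝ) * Real.cos (a * y + b) ^ ((-2 : ℝ) - 1)
            * (-Real.sin (a * y + b) * a))
          ((-2 : ℝ) * (((-2 : ℝ) - 1) * Real.cos (a * x + b) ^ ((-2 : ℝ) - 1 - 1)
              * (-Real.sin (a * x + b) * a)) * (-Real.sin (a * x + b) * a)
            + (-2 : ℝ) * Real.cos (a * x + b) ^ ((-2 : ℝ) - 1)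
              * (-(Real.cos (a * x + b) * a) * a)) x :=
        ((hder ((-2 : ℝ) - 1) x hxne).const_mul (-2 : ℝ)).mul
          (((hsin x).neg).mul_const a)
      have hψ : (fun y => ubar y * deriv (fun z => Real.log (cbar z)) y) =ᶠ[nhds x]
          fun y => q * Real.cos (a * y + b) ^ (-3 : ℝ) * (-Real.sin (a * y + b) * a) := by
        filter_upwards [hU] with y hy
        have hlog : HasDerivAt (fun z => Real.log (Real.cos (a * z + b) ^ q))
            ((q * Real.cos (a * y + b) ^ (q - 1) * (-Real.sin (a * y + b) * a))
              / Real.cos (a * y + b) ^ q) y :=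
          (hder q y hy.ne').log (Real.rpow_pos_of_pos hy q).ne'
        simp only [hu, hc]
        rw [hlog.deriv, div_eq_mul_inv, ← Real.rpow_neg hy.le]
        have hcol : Real.cos (a * y + b) ^ (-2 : ℝ) * Real.cos (a * y + b) ^ (q - 1)
              * Real.cos (a * y + b) ^ (-q)
            = Real.cos (a * y + b) ^ (-3 : ℝ) := by
          rw [← Real.rpow_add hy, ← Real.rpow_add hy]
          congr 1
          ring
        linear_combination q * (-Real.sin (a * y + b) * a) * hcol
      have hG : HasDerivAt
          (fun y => q * Real.cos (a * y + b) ^ (-3 : ℝ) * (-Real.sin (a * y + b) * a))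
          (q * ((-3 : ℝ) * Real.cos (a * x + b) ^ ((-3 : ℝ) - 1)
              * (-Real.sin (a * x + b) * a)) * (-Real.sin (a * x + b) * a)
            + q * Real.cos (a * x + b) ^ (-3 : ℝ)
              * (-(Real.cos (a * x + b) * a) * a)) x :=
        ((hder (-3 : ℝ) x hxne).const_mul q).mul (((hsin x).neg).mul_const a)
      rw [hu1.deriv_eq, hF.deriv, hψ.deriv_eq, hG.deriv,
        show ((-2 : ℝ) - 1) = (-3 : ℝ) by norm_num]
      linear_combination (3 * Real.cos (a * x + b) ^ ((-3 : ℝ) - 1)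
          * Real.sin (a * x + b) ^ 2 * a ^ 2
        + Real.cos (a * x + b) ^ (-3 : ℝ) * Real.cos (a * x + b) * a ^ 2) * hχq
    · -- second equation
      have hc1 : deriv cbar =ᶠ[nhds x]
          fun y => q * Real.cos (a * y + b) ^ (q - 1) * (-Real.sin (a * y + b) * a) := by
        filter_upwards [hU] with y hy
        rw [hc]
        exact (hder q y hy.ne').deriv
      have hG2 : HasDerivAt
          (fun y => q * Real.cos (a * y + b) ^ (q - 1) * (-Real.sin (a * y + b) * a))
          (q * ((q - 1) * Real.cos (a * x + b) ^ (q - 1 - 1)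
              * (-Real.sin (a * x + b) * a)) * (-Real.sin (a * x + b) * a)
            + q * Real.cos (a * x + b) ^ (q - 1)
              * (-(Real.cos (a * x + b) * a) * a)) x :=
        ((hder (q - 1) x hxne).const_mul q).mul (((hsin x).neg).mul_const a)
      have hMQ : Real.cos (a * x + b) ^ (-2 : ℝ) * Real.cos (a * x + b) ^ q
          = Real.cos (a * x + b) ^ (q - 1 - 1) := by
        rw [← Real.rpow_add hx]
        congr 1
        ring
      have hQ : Real.cos (a * x + b) ^ q
          = Real.cos (a * x + b) ^ (q - 1) * Real.cos (a * x + b) := by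
        rw [← Real.rpow_add_one hxne]
        congr 1
        ring
      have hPR : Real.cos (a * x + b) ^ (q - 1)
          = Real.cos (a * x + b) ^ (q - 1 - 1) * Real.cos (a * x + b) := by
        rw [← Real.rpow_add_one hxne]
        congr 1
        ring
      have hs2 : Real.sin (a * x + b) ^ 2 = 1 - Real.cos (a * x + b) ^ 2 := by
        have := Real.sin_sq_add_cos_sq (a * x + b); linarith
      have k1 : ε * q * (q - 1) * a ^ 2 = μ := by
        rw [hq, ha2]; field_simp; ring
      have k2 : ε * q ^ 2 * a ^ 2 = -σ := by
        rw [hq, ha2, hσ]; field_simp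
      rw [hc1.deriv_eq, hG2.deriv]
      simp only [hu, hc]
      rw [mul_assoc μ (Real.cos (a * x + b) ^ (-2 : ℝ)) (Real.cos (a * x + b) ^ q),
        hMQ, hQ, hPR]
      linear_combination (ε * q * (q - 1) * Real.cos (a * x + b) ^ (q - 1 - 1) * a ^ 2) * hs2
        + Real.cos (a * x + b) ^ (q - 1 - 1) * k1
        - (Real.cos (a * x + b) ^ (q - 1 - 1) * Real.cos (a * x + b) ^ 2) * k2
  · have h2 : (0:ℝ) < 2 * d * μ := by positivity
    rw [hσ]
    exact div_neg_of_neg_of_pos (by linarith) hdχ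
end

section
/- Let d, ε, χ, μ be positive real numbers. Let ū, v̄ : ℝ → ℝ be twice continuously differentiable with u_min ≤ ū(x) ≤ u_max on [0,1] for some constants u_max ≥ u_min > 0, v̄′(x) ≥ 0 on [0,1], and ū″(x)/2 − 2·v̄(x)·ū′(x) + (ū·v̄)′(x) ≤ 0 on [0,1]. Then for every M > 0 there exist constants δ₁ > 0, C > 0, and γ > 0 such that the following holds: for all smooth functions ũ, ṽ : ℝ × ℝ → ℝ satisfying, for all t ≥ 0 and x ∈ [0,1], the perturbation system ∂ₜũ = d·∂ₓₓũ − χ·∂ₓ(ũ·ṽ + ū·ṽ + v̄·ũ) and ∂ₜṽ = ε·∂ₓₓṽ + ε·∂ₓ(ṽ² + 2·v̄·ṽ) − μ·∂ₓũ, with ũ(t,0) = ũ(t,1) = ṽ(t,0) = ṽ(t,1) = 0 for all t ≥ 0, and such that for all t ≥ 0, (∫₀¹ ũ(t,x)² dx)^{1/2} + (∫₀¹ ṽ(t,x)² dx)^{1/2} ≤ δ₁ and (∫₀¹ (∂ₓũ(t,x))² dx)^{1/2} + (∫₀¹ (∂ₓṽ(t,x))² dx)^{1/2} ≤ M, one has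 for all t ≥ 0: ∫₀¹ ũ(t,x)² dx + ∫₀¹ ṽ(t,x)² dx ≤ C·exp(−γ·t)·( ∫₀¹ ũ(0,x)² dx + ∫₀¹ ṽ(0,x)² dx ). -/
open intervalIntegral MeasureTheory Set


private lemma cs_aux {P Q R : ℝ} (hP : 0 ≤ P) (key : ∀ lam : ℝ, 0 ≤ lam^2*P + 2*lam*Q + R) :
    Q^2 ≤ P * R := by
  rcases eq_or_lt_of_le hP with h0 | hP
  · have hQ : Q = 0 := by
      by_contra hQ
      have h1 := key (-(R+1)/(2*Q))
      rw [← h0] at h1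
      have : (-(R+1)/(2*Q))^2*0 + 2*(-(R+1)/(2*Q))*Q + R = -1 := by field_simp; ring
      rw [this] at h1; linarith
    simp [hQ, ← h0]
  · have h2 := key (-(Q/P))
    have h3 : (-(Q/P))^2*P + 2*(-(Q/P))*Q + R = R - Q^2/P := by field_simp; ring
    rw [h3] at h2
    have h4 : Q^2/P ≤ R := by linarith
    calc Q^2 = (Q^2/P) * P := by field_simp
    _ ≤ R * P := by apply mul_le_mul_of_nonneg_right h4 hP.le
    _ = P * R := mul_comm _ _

/-- Cauchy–Schwarz for interval integrals of continuous functions. -/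
lemma cs_integral {p q : ℝ} (hpq : p ≤ q) (f g : ℝ → ℝ) (hf : Continuous f) (hg : Continuous g) :
    (∫ x in p..q, f x * g x)^2 ≤ (∫ x in p..q, (f x)^2) * (∫ x in p..q, (g x)^2) := by
  set P := ∫ x in p..q, (f x)^2 with hPdef
  set Q := ∫ x in p..q, f x * g x with hQdef
  set R := ∫ x in p..q, (g x)^2 with hRdef
  have hP : 0 ≤ P := intervalIntegral.integral_nonneg hpq (fun u _ => sq_nonneg _)
  apply cs_aux hP
  intro lam
  have h1 : (0:ℝ) ≤ ∫ x in p..q, (lam * f x + g x)^2 :=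
    intervalIntegral.integral_nonneg hpq (fun u _ => sq_nonneg _)
  have h2 : ∫ x in p..q, (lam * f x + g x)^2
      = lam^2*P + 2*lam*Q + R := by
    have e : ∀ x, (lam * f x + g x)^2 = lam^2*(f x)^2 + (2*lam*(f x * g x) + (g x)^2) := by
      intro x; ring
    rw [intervalIntegral.integral_congr (g := fun x => lam^2*(f x)^2 + (2*lam*(f x * g x) + (g x)^2)) (fun x _ => e x)]
    rw [intervalIntegral.integral_add, intervalIntegral.integral_add, intervalIntegral.integral_const_mul,
      intervalIntegral.integral_const_mul]
    · ring
    · exact ((continuous_const.mul (hf.mul hg))).intervalIntegrable _ _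
    · exact (hg.pow 2).intervalIntegrable _ _
    · exact (continuous_const.mul (hf.pow 2)).intervalIntegrable _ _
    · exact ((continuous_const.mul (hf.mul hg)).add (hg.pow 2)).intervalIntegrable _ _
  rw [← h2]; exact h1

lemma sq_le_L2 {f : ℝ → ℝ} (hf : Differentiable ℝ f) (hf' : Continuous (deriv f))
    (h0 : f 0 = 0) {x : ℝ} (hx : x ∈ Icc (0:ℝ) 1) :
    (f x)^2 ≤ (∫ y in (0:ℝ)..1, (deriv f y)^2) * x := by
  have hftc : ∫ y in (0:ℝ)..x, deriv f y = f x - f 0 :=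
    intervalIntegral.integral_eq_sub_of_hasDerivAt
      (fun y _ => (hf y).hasDerivAt) (hf'.intervalIntegrable _ _)
  have hfx : f x = ∫ y in (0:ℝ)..x, deriv f y * 1 := by
    simp only [mul_one]; rw [hftc, h0, sub_zero]
  have hcs := cs_integral hx.1 (deriv f) (fun _ => 1) hf' continuous_const
  rw [← hfx] at hcs
  have h1 : (∫ y in (0:ℝ)..x, (1:ℝ)^2) = x := by simp
  rw [h1] at hcs
  refine hcs.trans (mul_le_mul_of_nonneg_right ?_ hx.1)
  exact intervalIntegral.integral_mono_interval le_rfl hx.1 hx.2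
    (Filter.Eventually.of_forall (fun y => sq_nonneg _)) ((hf'.pow 2).intervalIntegrable _ _)

/-- Poincaré inequality on `[0,1]` with `f 0 = 0`. -/
lemma poincare {f : ℝ → ℝ} (hf : Differentiable ℝ f) (hf' : Continuous (deriv f))
    (h0 : f 0 = 0) :
    (∫ x in (0:ℝ)..1, (f x)^2) ≤ ∫ x in (0:ℝ)..1, (deriv f x)^2 := by
  have hmono : ∀ x ∈ Icc (0:ℝ) 1, (f x)^2 ≤ ∫ y in (0:ℝ)..1, (deriv f y)^2 := by
    intro x hx
    have := sq_le_L2 hf hf' h0 hx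
    have hnn : (0:ℝ) ≤ ∫ y in (0:ℝ)..1, (deriv f y)^2 :=
      intervalIntegral.integral_nonneg zero_le_one (fun u _ => sq_nonneg _)
    nlinarith [hx.1, hx.2]
  calc (∫ x in (0:ℝ)..1, (f x)^2)
      ≤ ∫ _x in (0:ℝ)..1, (∫ y in (0:ℝ)..1, (deriv f y)^2) := by
        apply intervalIntegral.integral_mono_on zero_le_one
          ((hf.continuous.pow 2).intervalIntegrable _ _)
          (intervalIntegrable_const) hmono
    _ = ∫ y in (0:ℝ)..1, (deriv f y)^2 := by simp

/-- Sobolev-type sup bound on `[0,1]` with `f 0 = 0`. -/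
lemma sobolev {f : ℝ → ℝ} (hf : Differentiable ℝ f) (hf' : Continuous (deriv f))
    (h0 : f 0 = 0) {x : ℝ} (hx : x ∈ Icc (0:ℝ) 1) :
    (f x)^2 ≤ 2 * Real.sqrt (∫ y in (0:ℝ)..1, (f y)^2) * Real.sqrt (∫ y in (0:ℝ)..1, (deriv f y)^2) := by
  have hftc : ∫ y in (0:ℝ)..x, 2 * f y * deriv f y = (f x)^2 - (f 0)^2 :=
    intervalIntegral.integral_eq_sub_of_hasDerivAt
      (f := fun y => (f y)^2)
      (fun y _ => by
        have h := ((hf y).hasDerivAt).fun_pow 2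
        simpa [mul_comm, mul_assoc, mul_left_comm] using h)
      (((continuous_const.mul hf.continuous).mul hf').intervalIntegrable _ _)
  have h1 : (f x)^2 = ∫ y in (0:ℝ)..x, 2 * f y * deriv f y := by rw [hftc, h0]; ring_nf
  have h2 : (∫ y in (0:ℝ)..x, 2 * f y * deriv f y) ≤ ∫ y in (0:ℝ)..1, 2 * |f y| * |deriv f y| := by
    calc (∫ y in (0:ℝ)..x, 2 * f y * deriv f y)
        ≤ ∫ y in (0:ℝ)..x, 2 * |f y| * |deriv f y| := by
          apply intervalIntegral.integral_mono_on hx.1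
            (((continuous_const.mul hf.continuous).mul hf').intervalIntegrable _ _)
            (((continuous_const.mul hf.continuous.abs).mul hf'.abs).intervalIntegrable _ _)
          intro y _
          have : f y * deriv f y ≤ |f y| * |deriv f y| := by
            calc f y * deriv f y ≤ |f y * deriv f y| := le_abs_self _
            _ = |f y| * |deriv f y| := abs_mul _ _
          show 2 * f y * deriv f y ≤ 2 * |f y| * |deriv f y|
          nlinarith
      _ ≤ ∫ y in (0:ℝ)..1, 2 * |f y| * |deriv f y| := by
          apply intervalIntegral.integral_mono_interval le_rfl hx.1 hx.2
            (Filter.Eventually.of_forall (fun y => by show (0:ℝ) ≤ 2 * |f y| * |deriv f y|; positivity))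
            (((continuous_const.mul hf.continuous.abs).mul hf'.abs).intervalIntegrable _ _)
  have h3 : (∫ y in (0:ℝ)..1, |f y| * |deriv f y|)
      ≤ Real.sqrt (∫ y in (0:ℝ)..1, (f y)^2) * Real.sqrt (∫ y in (0:ℝ)..1, (deriv f y)^2) := by
    have hcs := cs_integral zero_le_one (fun y => |f y|) (fun y => |deriv f y|)
      hf.continuous.abs hf'.abs
    have e1 : (∫ y in (0:ℝ)..1, |f y|^2) = ∫ y in (0:ℝ)..1, (f y)^2 := by
      apply intervalIntegral.integral_congr; intro y _; simp [sq_abs]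
    have e2 : (∫ y in (0:ℝ)..1, |deriv f y|^2) = ∫ y in (0:ℝ)..1, (deriv f y)^2 := by
      apply intervalIntegral.integral_congr; intro y _; simp [sq_abs]
    rw [e1, e2] at hcs
    have hnnP : (0:ℝ) ≤ ∫ y in (0:ℝ)..1, (f y)^2 :=
      intervalIntegral.integral_nonneg zero_le_one (fun u _ => sq_nonneg _)
    have hnnR : (0:ℝ) ≤ ∫ y in (0:ℝ)..1, (deriv f y)^2 :=
      intervalIntegral.integral_nonneg zero_le_one (fun u _ => sq_nonneg _)
    have hs := Real.sqrt_le_sqrt hcs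
    rw [Real.sqrt_sq (intervalIntegral.integral_nonneg zero_le_one
        (fun u _ => mul_nonneg (abs_nonneg _) (abs_nonneg _))), Real.sqrt_mul hnnP] at hs
    exact hs
  have h4 : (∫ y in (0:ℝ)..1, 2 * |f y| * |deriv f y|) = 2 * ∫ y in (0:ℝ)..1, |f y| * |deriv f y| := by
    rw [← intervalIntegral.integral_const_mul]
    apply intervalIntegral.integral_congr; intro y _; ring
  rw [h1]
  calc (∫ y in (0:ℝ)..x, 2 * f y * deriv f y) ≤ ∫ y in (0:ℝ)..1, 2 * |f y| * |deriv f y| := h2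
    _ = 2 * ∫ y in (0:ℝ)..1, |f y| * |deriv f y| := h4
    _ ≤ 2 * (Real.sqrt (∫ y in (0:ℝ)..1, (f y)^2) * Real.sqrt (∫ y in (0:ℝ)..1, (deriv f y)^2)) := by
        linarith
    _ = 2 * Real.sqrt (∫ y in (0:ℝ)..1, (f y)^2) * Real.sqrt (∫ y in (0:ℝ)..1, (deriv f y)^2) := by ring


/-- `∫ |f| |g| ≤ ‖f‖₂ ‖g‖₂` on `[0,1]`. -/
lemma l2_mul (f g : ℝ → ℝ) (hf : Continuous f) (hg : Continuous g) :
    (∫ x in (0:ℝ)..1, |f x| * |g x|)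
      ≤ Real.sqrt (∫ x in (0:ℝ)..1, (f x)^2) * Real.sqrt (∫ x in (0:ℝ)..1, (g x)^2) := by
  have hcs := cs_integral zero_le_one (fun y => |f y|) (fun y => |g y|) hf.abs hg.abs
  have e1 : (∫ y in (0:ℝ)..1, |f y|^2) = ∫ y in (0:ℝ)..1, (f y)^2 :=
    intervalIntegral.integral_congr (fun y _ => by simp [sq_abs])
  have e2 : (∫ y in (0:ℝ)..1, |g y|^2) = ∫ y in (0:ℝ)..1, (g y)^2 :=
    intervalIntegral.integral_congr (fun y _ => by simp [sq_abs])
  rw [e1, e2] at hcs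
  have hnnP : (0:ℝ) ≤ ∫ y in (0:ℝ)..1, (f y)^2 :=
    intervalIntegral.integral_nonneg zero_le_one (fun u _ => sq_nonneg _)
  have hs := Real.sqrt_le_sqrt hcs
  rw [Real.sqrt_sq (intervalIntegral.integral_nonneg zero_le_one
      (fun u _ => mul_nonneg (abs_nonneg _) (abs_nonneg _))), Real.sqrt_mul hnnP] at hs
  exact hs

set_option maxHeartbeats 1600000 in
lemma core (d ε χ μ umin umax K η : ℝ) (hd : 0 < d) (hε : 0 < ε) (hχ : 0 < χ) (hμ : 0 < μ)
    (humin : 0 < umin) (humax : umin ≤ umax)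
    (ubar vbar : ℝ → ℝ) (hub : ContDiff ℝ 2 ubar) (hvb : ContDiff ℝ 2 vbar)
    (hbd : ∀ x ∈ Set.Icc (0 : ℝ) 1, umin ≤ ubar x ∧ ubar x ≤ umax)
    (hmono : ∀ x ∈ Set.Icc (0 : ℝ) 1, 0 ≤ deriv vbar x)
    (hL : ∀ x ∈ Set.Icc (0 : ℝ) 1,
      deriv (deriv ubar) x / 2 - 2 * vbar x * deriv ubar x
        + deriv (fun y => ubar y * vbar y) x ≤ 0)
    (hK : ∀ x ∈ Set.Icc (0 : ℝ) 1, |deriv ubar x| ≤ K)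
    (a b : ℝ → ℝ) (ha : ContDiff ℝ (⊤:ℕ∞) a) (hb : ContDiff ℝ (⊤:ℕ∞) b)
    (ha0 : a 0 = 0) (ha1 : a 1 = 0) (hb0 : b 0 = 0) (hb1 : b 1 = 0)
    (hsm : ∀ x ∈ Set.Icc (0 : ℝ) 1, |a x| ≤ η ∧ |b x| ≤ η)
    (hη0 : 0 ≤ η) (hη1 : χ*η ≤ d/2) (hη2 : K*η ≤ umin/4) (hη3 : umax*η ≤ umin/4) :
    (∫ x in (0:ℝ)..1,
        (a x * (d * deriv (deriv a) x
            - χ * deriv (fun y => a y * b y + ubar y * b y + vbar y * a y) x)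
          + (χ/μ) * (ubar x * (b x * (ε * deriv (deriv b) x
              + ε * deriv (fun y => (b y)^2 + 2*vbar y*b y) x - μ * deriv a x)))))
      ≤ -(d/2) * (∫ x in (0:ℝ)..1, (a x)^2)
          - (χ*ε*umin/(2*μ)) * (∫ x in (0:ℝ)..1, (b x)^2) := by
  -- basic differentiability facts
  have haD : Differentiable ℝ a := ha.differentiable (by simp)
  have hbD : Differentiable ℝ b := hb.differentiable (by simp)
  have ha' : ContDiff ℝ (⊤:ℕ∞) (deriv a) := (contDiff_infty_iff_deriv.mp ha).2
  have hb' : ContDiff ℝ (⊤:ℕ∞) (deriv b) := (contDiff_infty_iff_deriv.mp hb).2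
  have haD' : Differentiable ℝ (deriv a) := ha'.differentiable (by simp)
  have hbD' : Differentiable ℝ (deriv b) := hb'.differentiable (by simp)
  have hca : Continuous a := haD.continuous
  have hcb : Continuous b := hbD.continuous
  have hca1 : Continuous (deriv a) := haD'.continuous
  have hcb1 : Continuous (deriv b) := hbD'.continuous
  have hca2 : Continuous (deriv (deriv a)) := (contDiff_infty_iff_deriv.mp ha').2.continuous
  have hcb2 : Continuous (deriv (deriv b)) := (contDiff_infty_iff_deriv.mp hb').2.continuous
  have hda : ∀ x, HasDerivAt a (deriv a x) x := fun x => (haD x).hasDerivAt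
  have hdb : ∀ x, HasDerivAt b (deriv b x) x := fun x => (hbD x).hasDerivAt
  have hda1 : ∀ x, HasDerivAt (deriv a) (deriv (deriv a) x) x := fun x => (haD' x).hasDerivAt
  have hdb1 : ∀ x, HasDerivAt (deriv b) (deriv (deriv b) x) x := fun x => (hbD' x).hasDerivAt
  have hU1 : ContDiff ℝ 1 (deriv ubar) := by
    have := (contDiff_succ_iff_deriv (n:=1)).mp (by exact_mod_cast hub)
    exact this.2.2
  have hUD : Differentiable ℝ ubar := hub.differentiable (by norm_num)
  have hU1D : Differentiable ℝ (deriv ubar) := hU1.differentiable one_ne_zero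
  have hcU : Continuous ubar := hUD.continuous
  have hcU1 : Continuous (deriv ubar) := hU1D.continuous
  have hcU2 : Continuous (deriv (deriv ubar)) := by
    have := (contDiff_succ_iff_deriv (n:=0)).mp (by exact_mod_cast hU1)
    exact this.2.2.continuous
  have hdU : ∀ x, HasDerivAt ubar (deriv ubar x) x := fun x => (hUD x).hasDerivAt
  have hdU1 : ∀ x, HasDerivAt (deriv ubar) (deriv (deriv ubar) x) x := fun x => (hU1D x).hasDerivAt
  have hVD : Differentiable ℝ vbar := hvb.differentiable (by norm_num)
  have hcV : Continuous vbar := hVD.continuous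
  have hcV1 : Continuous (deriv vbar) := by
    have := (contDiff_succ_iff_deriv (n:=1)).mp (by exact_mod_cast hvb)
    exact this.2.2.continuous
  have hdV : ∀ x, HasDerivAt vbar (deriv vbar x) x := fun x => (hVD x).hasDerivAt
  -- derivative expansions
  have hD1 : ∀ x, deriv (fun y => a y * b y + ubar y * b y + vbar y * a y) x
      = (deriv a x * b x + a x * deriv b x + (deriv ubar x * b x + ubar x * deriv b x))
        + (deriv vbar x * a x + vbar x * deriv a x) := fun x =>
    ((((hda x).mul (hdb x)).add ((hdU x).mul (hdb x))).add ((hdV x).mul (hda x))).deriv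
  have hD2 : ∀ x, deriv (fun y => (b y)^2 + 2*vbar y*b y) x
      = ((2:ℕ) * b x ^ (2-1) * deriv b x)
        + ((2 * deriv vbar x) * b x + (2 * vbar x) * deriv b x) := fun x =>
    (((hdb x).fun_pow 2).add (((hdV x).const_mul 2).mul (hdb x))).deriv
  have hD3 : ∀ x, deriv (fun y => ubar y * vbar y) x
      = deriv ubar x * vbar x + ubar x * deriv vbar x := fun x =>
    ((hdU x).mul (hdV x)).deriv
  -- the explicit integrand L and remainder R
  set c : ℝ := χ*ε/μ with hc
  have hc0 : 0 < c := by positivity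
  set f1 : ℝ → ℝ := fun x => (deriv a x)^2 with hf1
  set f2 : ℝ → ℝ := fun x => ubar x * (deriv b x)^2 with hf2
  set f3 : ℝ → ℝ := fun x => deriv vbar x * (a x)^2 with hf3
  set f4 : ℝ → ℝ := fun x => (deriv (deriv ubar) x / 2 - 2 * vbar x * deriv ubar x
      + (deriv ubar x * vbar x + ubar x * deriv vbar x)) * (b x)^2 with hf4
  set f5 : ℝ → ℝ := fun x => deriv a x * (a x * b x) with hf5
  set f6 : ℝ → ℝ := fun x => deriv ubar x * (b x)^3 with hf6
  set f7 : ℝ → ℝ := fun x => ubar x * (deriv b x * (b x)^2) with hf7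
  set R : ℝ → ℝ := fun x => (-d)*f1 x + ((-c)*f2 x + ((-(χ/2))*f3 x + (c*f4 x
      + (χ*f5 x + ((-c)*f6 x + (-c)*f7 x))))) with hR
  set L : ℝ → ℝ := fun x =>
      a x * (d * deriv (deriv a) x
          - χ * deriv (fun y => a y * b y + ubar y * b y + vbar y * a y) x)
        + (χ/μ) * (ubar x * (b x * (ε * deriv (deriv b) x
            + ε * deriv (fun y => (b y)^2 + 2*vbar y*b y) x - μ * deriv a x))) with hLdef
  -- the antiderivative G
  set G : ℝ → ℝ := fun x =>
      d * (a x * deriv a x)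
      - χ * (a x * (a x * b x + ubar x * b x + vbar x * a x))
      + (χ/2) * (vbar x * (a x)^2)
      + c * (ubar x * b x * deriv b x)
      - (c/2) * (deriv ubar x * (b x)^2)
      + c * (ubar x * b x * ((b x)^2 + 2*vbar x*b x))
      - c * (ubar x * vbar x * (b x)^2) with hG
  have hGd : ∀ x, HasDerivAt G (L x - R x) x := by
    intro x
    have h :=
      (((((((((hda x).mul (hda1 x)).const_mul d).sub
        (((hda x).mul ((((hda x).mul (hdb x)).add ((hdU x).mul (hdb x))).add
          ((hdV x).mul (hda x)))).const_mul χ)).add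
        (((hdV x).mul ((hda x).fun_pow 2)).const_mul (χ/2))).add
        ((((hdU x).mul (hdb x)).mul (hdb1 x)).const_mul c)).sub
        (((hdU1 x).mul ((hdb x).fun_pow 2)).const_mul (c/2))).add
        ((((hdU x).mul (hdb x)).mul (((hdb x).fun_pow 2).add
          (((hdV x).const_mul 2).mul (hdb x)))).const_mul c)).sub
        ((((hdU x).mul (hdV x)).mul ((hdb x).fun_pow 2)).const_mul c))
    refine h.congr_deriv ?_
    have hμ' : μ ≠ 0 := ne_of_gt hμ
    simp only [hLdef, hR, hc, hf1, hf2, hf3, hf4, hf5, hf6, hf7, hD1, hD2]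
    push_cast
    simp only [Pi.mul_apply, Pi.add_apply]
    field_simp
    ring
  -- continuity of L and R
  have hcL : Continuous L := by
    have h1 : Continuous (fun x => deriv (fun y => a y * b y + ubar y * b y + vbar y * a y) x) := by
      rw [funext hD1]; fun_prop
    have h2 : Continuous (fun x => deriv (fun y => (b y)^2 + 2*vbar y*b y) x) := by
      rw [funext hD2]; fun_prop
    rw [hLdef]; fun_prop
  have hcR : Continuous R := by rw [hR]; simp only [hf1, hf2, hf3, hf4, hf5, hf6, hf7]; fun_prop
  -- FTC : ∫ (L - R) = 0
  have hftc : (∫ x in (0:ℝ)..1, (L x - R x)) = G 1 - G 0 :=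
    intervalIntegral.integral_eq_sub_of_hasDerivAt (fun x _ => hGd x)
      ((hcL.sub hcR).intervalIntegrable _ _)
  have hG10 : G 1 - G 0 = 0 := by
    simp only [hG, ha0, ha1, hb0, hb1]; ring
  have hLR : (∫ x in (0:ℝ)..1, L x) = ∫ x in (0:ℝ)..1, R x := by
    have := intervalIntegral.integral_sub (hcL.intervalIntegrable (μ := volume) 0 1)
      (hcR.intervalIntegrable 0 1)
    rw [hftc, hG10] at this
    linarith
  -- continuity of the pieces
  have hcf1 : Continuous f1 := by rw [hf1]; fun_prop
  have hcf2 : Continuous f2 := by rw [hf2]; fun_prop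
  have hcf3 : Continuous f3 := by rw [hf3]; fun_prop
  have hcf4 : Continuous f4 := by rw [hf4]; fun_prop
  have hcf5 : Continuous f5 := by rw [hf5]; fun_prop
  have hcf6 : Continuous f6 := by rw [hf6]; fun_prop
  have hcf7 : Continuous f7 := by rw [hf7]; fun_prop
  have m1 : IntervalIntegrable (fun x => (-d)*f1 x) volume 0 1 :=
    (continuous_const.mul hcf1).intervalIntegrable _ _
  have m2 : IntervalIntegrable (fun x => (-c)*f2 x) volume 0 1 :=
    (continuous_const.mul hcf2).intervalIntegrable _ _
  have m3 : IntervalIntegrable (fun x => (-(χ/2))*f3 x) volume 0 1 :=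
    (continuous_const.mul hcf3).intervalIntegrable _ _
  have m4 : IntervalIntegrable (fun x => c*f4 x) volume 0 1 :=
    (continuous_const.mul hcf4).intervalIntegrable _ _
  have m5 : IntervalIntegrable (fun x => χ*f5 x) volume 0 1 :=
    (continuous_const.mul hcf5).intervalIntegrable _ _
  have m6 : IntervalIntegrable (fun x => (-c)*f6 x) volume 0 1 :=
    (continuous_const.mul hcf6).intervalIntegrable _ _
  have m7 : IntervalIntegrable (fun x => (-c)*f7 x) volume 0 1 :=
    (continuous_const.mul hcf7).intervalIntegrable _ _
  have hsplit : (∫ x in (0:ℝ)..1, R x)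
      = (-d)*(∫ x in (0:ℝ)..1, f1 x) + ((-c)*(∫ x in (0:ℝ)..1, f2 x)
        + ((-(χ/2))*(∫ x in (0:ℝ)..1, f3 x) + (c*(∫ x in (0:ℝ)..1, f4 x)
        + (χ*(∫ x in (0:ℝ)..1, f5 x) + ((-c)*(∫ x in (0:ℝ)..1, f6 x)
        + (-c)*(∫ x in (0:ℝ)..1, f7 x)))))) := by
    rw [hR]
    rw [intervalIntegral.integral_add m1 (m2.add (m3.add (m4.add (m5.add (m6.add m7))))),
        intervalIntegral.integral_add m2 (m3.add (m4.add (m5.add (m6.add m7)))),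
        intervalIntegral.integral_add m3 (m4.add (m5.add (m6.add m7))),
        intervalIntegral.integral_add m4 (m5.add (m6.add m7)),
        intervalIntegral.integral_add m5 (m6.add m7),
        intervalIntegral.integral_add m6 m7,
        intervalIntegral.integral_const_mul, intervalIntegral.integral_const_mul,
        intervalIntegral.integral_const_mul, intervalIntegral.integral_const_mul,
        intervalIntegral.integral_const_mul, intervalIntegral.integral_const_mul,
        intervalIntegral.integral_const_mul]
  -- Poincaré bounds
  have hPa : (∫ x in (0:ℝ)..1, (a x)^2) ≤ ∫ x in (0:ℝ)..1, (deriv a x)^2 := poincare haD hca1 ha0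
  have hPb : (∫ x in (0:ℝ)..1, (b x)^2) ≤ ∫ x in (0:ℝ)..1, (deriv b x)^2 := poincare hbD hcb1 hb0
  have hA1nn : (0:ℝ) ≤ ∫ x in (0:ℝ)..1, (deriv a x)^2 :=
    intervalIntegral.integral_nonneg zero_le_one (fun u _ => sq_nonneg _)
  have hB1nn : (0:ℝ) ≤ ∫ x in (0:ℝ)..1, (deriv b x)^2 :=
    intervalIntegral.integral_nonneg zero_le_one (fun u _ => sq_nonneg _)
  have hK0 : 0 ≤ K := le_trans (abs_nonneg _) (hK 0 ⟨le_rfl, zero_le_one⟩)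
  -- J2 lower bound
  have hJ2 : umin * (∫ x in (0:ℝ)..1, (deriv b x)^2) ≤ ∫ x in (0:ℝ)..1, f2 x := by
    have h := intervalIntegral.integral_mono_on (μ := volume) (f := fun x => umin * (deriv b x)^2) zero_le_one
      ((continuous_const.mul (hcb1.pow 2)).intervalIntegrable 0 1)
      (hcf2.intervalIntegrable 0 1)
      (fun x hx => by
        rw [hf2]
        exact mul_le_mul_of_nonneg_right (hbd x hx).1 (sq_nonneg _))
    rwa [intervalIntegral.integral_const_mul] at h
  -- J3 nonneg
  have hJ3 : (0:ℝ) ≤ ∫ x in (0:ℝ)..1, f3 x :=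
    intervalIntegral.integral_nonneg zero_le_one (fun x hx => by
      rw [hf3]; exact mul_nonneg (hmono x hx) (sq_nonneg _))
  -- J4 nonpos
  have hJ4 : (∫ x in (0:ℝ)..1, f4 x) ≤ 0 := by
    have h := intervalIntegral.integral_mono_on (μ := volume) (g := fun _ => (0:ℝ)) zero_le_one
      (hcf4.intervalIntegrable 0 1) intervalIntegrable_const
      (fun x hx => by
        have hh := hL x hx
        rw [hD3 x] at hh
        rw [hf4]
        exact mul_nonpos_of_nonpos_of_nonneg hh (sq_nonneg _))
    simpa using h
  -- J5 bound
  have hJ5 : (∫ x in (0:ℝ)..1, f5 x) ≤ η * ∫ x in (0:ℝ)..1, (deriv a x)^2 := by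
    have step1 : (∫ x in (0:ℝ)..1, f5 x) ≤ ∫ x in (0:ℝ)..1, η * (|deriv a x| * |a x|) := by
      apply intervalIntegral.integral_mono_on zero_le_one (hcf5.intervalIntegrable 0 1)
        ((continuous_const.mul (hca1.abs.mul hca.abs)).intervalIntegrable 0 1)
      intro x hx
      rw [hf5]
      calc deriv a x * (a x * b x) ≤ |deriv a x * (a x * b x)| := le_abs_self _
        _ = (|deriv a x| * |a x|) * |b x| := by rw [abs_mul, abs_mul]; ring
        _ ≤ (|deriv a x| * |a x|) * η :=
            mul_le_mul_of_nonneg_left (hsm x hx).2 (by positivity)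
        _ = η * (|deriv a x| * |a x|) := by ring
    rw [intervalIntegral.integral_const_mul] at step1
    have step3 : (∫ x in (0:ℝ)..1, |deriv a x| * |a x|)
        ≤ Real.sqrt (∫ x in (0:ℝ)..1, (deriv a x)^2) * Real.sqrt (∫ x in (0:ℝ)..1, (a x)^2) :=
      l2_mul (deriv a) a hca1 hca
    have step4 : Real.sqrt (∫ x in (0:ℝ)..1, (a x)^2) ≤ Real.sqrt (∫ x in (0:ℝ)..1, (deriv a x)^2) :=
      Real.sqrt_le_sqrt hPa
    have step5 : Real.sqrt (∫ x in (0:ℝ)..1, (deriv a x)^2) * Real.sqrt (∫ x in (0:ℝ)..1, (a x)^2)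
        ≤ ∫ x in (0:ℝ)..1, (deriv a x)^2 := by
      calc Real.sqrt (∫ x in (0:ℝ)..1, (deriv a x)^2) * Real.sqrt (∫ x in (0:ℝ)..1, (a x)^2)
          ≤ Real.sqrt (∫ x in (0:ℝ)..1, (deriv a x)^2) * Real.sqrt (∫ x in (0:ℝ)..1, (deriv a x)^2) :=
            mul_le_mul_of_nonneg_left step4 (Real.sqrt_nonneg _)
        _ = ∫ x in (0:ℝ)..1, (deriv a x)^2 := Real.mul_self_sqrt hA1nn
    calc (∫ x in (0:ℝ)..1, f5 x) ≤ η * ∫ x in (0:ℝ)..1, |deriv a x| * |a x| := step1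
      _ ≤ η * ∫ x in (0:ℝ)..1, (deriv a x)^2 :=
          mul_le_mul_of_nonneg_left (step3.trans step5) hη0
  -- J6 bound
  have hJ6 : -(∫ x in (0:ℝ)..1, f6 x) ≤ K * η * ∫ x in (0:ℝ)..1, (deriv b x)^2 := by
    have step1 : (∫ x in (0:ℝ)..1, -f6 x) ≤ ∫ x in (0:ℝ)..1, (K*η) * (b x)^2 := by
      apply intervalIntegral.integral_mono_on zero_le_one (hcf6.neg.intervalIntegrable 0 1)
        ((continuous_const.mul (hcb.pow 2)).intervalIntegrable 0 1)
      intro x hx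
      rw [hf6]
      have e3 : |b x|^3 = |b x| * (b x)^2 := by rw [← sq_abs]; ring
      calc -(deriv ubar x * b x ^ 3) ≤ |deriv ubar x * b x ^ 3| := neg_le_abs _
        _ = |deriv ubar x| * |b x|^3 := by rw [abs_mul, abs_pow]
        _ = |deriv ubar x| * (|b x| * (b x)^2) := by rw [e3]
        _ ≤ K * (|b x| * (b x)^2) :=
            mul_le_mul_of_nonneg_right (hK x hx) (by positivity)
        _ ≤ K * (η * (b x)^2) :=
            mul_le_mul_of_nonneg_left
              (mul_le_mul_of_nonneg_right (hsm x hx).2 (sq_nonneg _)) hK0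
        _ = (K*η) * (b x)^2 := by ring
    rw [intervalIntegral.integral_neg, intervalIntegral.integral_const_mul] at step1
    have : (K*η) * (∫ x in (0:ℝ)..1, (b x)^2) ≤ (K*η) * ∫ x in (0:ℝ)..1, (deriv b x)^2 :=
      mul_le_mul_of_nonneg_left hPb (by positivity)
    linarith
  -- J7 bound
  have hJ7 : -(∫ x in (0:ℝ)..1, f7 x) ≤ umax * η * ∫ x in (0:ℝ)..1, (deriv b x)^2 := by
    have humax0 : (0:ℝ) ≤ umax := le_trans humin.le humax
    have step1 : (∫ x in (0:ℝ)..1, -f7 x) ≤ ∫ x in (0:ℝ)..1, (umax*η) * (|deriv b x| * |b x|) := by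
      apply intervalIntegral.integral_mono_on zero_le_one (hcf7.neg.intervalIntegrable 0 1)
        ((continuous_const.mul (hcb1.abs.mul hcb.abs)).intervalIntegrable 0 1)
      intro x hx
      rw [hf7]
      have habs : |ubar x| ≤ umax := by
        rw [abs_of_nonneg (le_trans humin.le (hbd x hx).1)]; exact (hbd x hx).2
      have e2 : |b x|^2 = |b x| * |b x| := sq (|b x|) ▸ by ring
      calc -(ubar x * (deriv b x * b x ^ 2)) ≤ |ubar x * (deriv b x * b x ^ 2)| := neg_le_abs _
        _ = |ubar x| * (|deriv b x| * |b x|^2) := by rw [abs_mul, abs_mul, abs_pow]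
        _ = |ubar x| * (|deriv b x| * (|b x| * |b x|)) := by rw [e2]
        _ ≤ umax * (|deriv b x| * (|b x| * |b x|)) :=
            mul_le_mul_of_nonneg_right habs (by positivity)
        _ ≤ umax * (|deriv b x| * (|b x| * η)) := by
            apply mul_le_mul_of_nonneg_left _ humax0
            apply mul_le_mul_of_nonneg_left _ (abs_nonneg _)
            exact mul_le_mul_of_nonneg_left (hsm x hx).2 (abs_nonneg _)
        _ = (umax*η) * (|deriv b x| * |b x|) := by ring
    rw [intervalIntegral.integral_neg, intervalIntegral.integral_const_mul] at step1
    have step3 : (∫ x in (0:ℝ)..1, |deriv b x| * |b x|)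
        ≤ Real.sqrt (∫ x in (0:ℝ)..1, (deriv b x)^2) * Real.sqrt (∫ x in (0:ℝ)..1, (b x)^2) :=
      l2_mul (deriv b) b hcb1 hcb
    have step4 : Real.sqrt (∫ x in (0:ℝ)..1, (b x)^2) ≤ Real.sqrt (∫ x in (0:ℝ)..1, (deriv b x)^2) :=
      Real.sqrt_le_sqrt hPb
    have step5 : Real.sqrt (∫ x in (0:ℝ)..1, (deriv b x)^2) * Real.sqrt (∫ x in (0:ℝ)..1, (b x)^2)
        ≤ ∫ x in (0:ℝ)..1, (deriv b x)^2 := by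
      calc Real.sqrt (∫ x in (0:ℝ)..1, (deriv b x)^2) * Real.sqrt (∫ x in (0:ℝ)..1, (b x)^2)
          ≤ Real.sqrt (∫ x in (0:ℝ)..1, (deriv b x)^2) * Real.sqrt (∫ x in (0:ℝ)..1, (deriv b x)^2) :=
            mul_le_mul_of_nonneg_left step4 (Real.sqrt_nonneg _)
        _ = ∫ x in (0:ℝ)..1, (deriv b x)^2 := Real.mul_self_sqrt hB1nn
    have : (umax*η) * (∫ x in (0:ℝ)..1, |deriv b x| * |b x|)
        ≤ (umax*η) * ∫ x in (0:ℝ)..1, (deriv b x)^2 :=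
      mul_le_mul_of_nonneg_left (step3.trans step5) (by positivity)
    linarith
  -- final assembly
  have hgoal : (∫ x in (0:ℝ)..1,
        (a x * (d * deriv (deriv a) x
            - χ * deriv (fun y => a y * b y + ubar y * b y + vbar y * a y) x)
          + (χ/μ) * (ubar x * (b x * (ε * deriv (deriv b) x
              + ε * deriv (fun y => (b y)^2 + 2*vbar y*b y) x - μ * deriv a x)))))
      = ∫ x in (0:ℝ)..1, L x := by rw [hLdef]
  rw [hgoal, hLR, hsplit]
  -- multiplied inequalities
  have p2 : c*(umin*(∫ x in (0:ℝ)..1, (deriv b x)^2)) ≤ c*(∫ x in (0:ℝ)..1, f2 x) :=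
    mul_le_mul_of_nonneg_left hJ2 hc0.le
  have p3 : (0:ℝ) ≤ (χ/2)*(∫ x in (0:ℝ)..1, f3 x) := mul_nonneg (by positivity) hJ3
  have p4 : c*(∫ x in (0:ℝ)..1, f4 x) ≤ 0 := mul_nonpos_of_nonneg_of_nonpos hc0.le hJ4
  have p5 : χ*(∫ x in (0:ℝ)..1, f5 x) ≤ χ*(η*(∫ x in (0:ℝ)..1, (deriv a x)^2)) :=
    mul_le_mul_of_nonneg_left hJ5 hχ.le
  have p6 : c*(-(∫ x in (0:ℝ)..1, f6 x)) ≤ c*(K*η*(∫ x in (0:ℝ)..1, (deriv b x)^2)) :=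
    mul_le_mul_of_nonneg_left hJ6 hc0.le
  have p7 : c*(-(∫ x in (0:ℝ)..1, f7 x)) ≤ c*(umax*η*(∫ x in (0:ℝ)..1, (deriv b x)^2)) :=
    mul_le_mul_of_nonneg_left hJ7 hc0.le
  have q1 : χ*η*(∫ x in (0:ℝ)..1, (deriv a x)^2) ≤ (d/2)*(∫ x in (0:ℝ)..1, (deriv a x)^2) :=
    mul_le_mul_of_nonneg_right hη1 hA1nn
  have q2 : c*((K*η + umax*η)*(∫ x in (0:ℝ)..1, (deriv b x)^2))
      ≤ c*((umin/2)*(∫ x in (0:ℝ)..1, (deriv b x)^2)) := by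
    apply mul_le_mul_of_nonneg_left _ hc0.le
    apply mul_le_mul_of_nonneg_right _ hB1nn
    linarith
  have q3 : (d/2)*(∫ x in (0:ℝ)..1, (a x)^2) ≤ (d/2)*(∫ x in (0:ℝ)..1, (deriv a x)^2) :=
    mul_le_mul_of_nonneg_left hPa (by positivity)
  have q4 : (c*(umin/2))*(∫ x in (0:ℝ)..1, (b x)^2)
      ≤ (c*(umin/2))*(∫ x in (0:ℝ)..1, (deriv b x)^2) :=
    mul_le_mul_of_nonneg_left hPb (by positivity)
  have hcoef : c*(umin/2) = χ*ε*umin/(2*μ) := by rw [hc]; ring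
  rw [← hcoef]
  linarith [p2, p3, p4, p5, p6, p7, q1, q2, q3, q4]


/-- Differentiation under the integral sign over `[0,1]` for jointly continuous data. -/
lemma dint (w w' : ℝ×ℝ → ℝ) (hw : Continuous w) (hw' : Continuous w')
    (hder : ∀ s x, HasDerivAt (fun r => w (r,x)) (w' (s,x)) s) (s₀ : ℝ) :
    HasDerivAt (fun s => ∫ x in (0:ℝ)..1, w (s,x)) (∫ x in (0:ℝ)..1, w' (s₀,x)) s₀ := by
  obtain ⟨Cb, hCb⟩ := (IsCompact.prod (isCompact_Icc (a := s₀-1) (b := s₀+1))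
    (isCompact_Icc (a := (0:ℝ)) (b := 1))).exists_bound_of_continuousOn hw'.continuousOn
  have h := intervalIntegral.hasDerivAt_integral_of_dominated_loc_of_deriv_le
    (𝕜 := ℝ) (μ := volume) (F := fun s x => w (s,x)) (F' := fun s x => w' (s,x))
    (x₀ := s₀) (a := 0) (b := 1) (bound := fun _ => Cb) (s := Metric.ball s₀ 1) (Metric.ball_mem_nhds s₀ one_pos)
    (Filter.Eventually.of_forall (fun r =>
      ((hw.comp (continuous_const.prodMk continuous_id)).aestronglyMeasurable)))
    ((hw.comp (continuous_const.prodMk continuous_id)).intervalIntegrable _ _)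
    ((hw'.comp (continuous_const.prodMk continuous_id)).aestronglyMeasurable)
    (Filter.Eventually.of_forall (fun x hx r hr => by
      have hx' : x ∈ Icc (0:ℝ) 1 := by
        rw [Set.uIoc_of_le zero_le_one] at hx; exact ⟨hx.1.le, hx.2⟩
      have hr' : r ∈ Icc (s₀-1) (s₀+1) := by
        rw [Metric.mem_ball, Real.dist_eq] at hr
        have := abs_lt.mp hr
        constructor <;> linarith [this.1, this.2]
      exact hCb (r,x) ⟨hr', hx'⟩))
    intervalIntegrable_const
    (Filter.Eventually.of_forall (fun x _ r _ => hder r x))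
  exact h.2

/-- Grönwall-type decay. -/
lemma gron (Eng E' : ℝ → ℝ) (γ : ℝ) (hγ : 0 < γ)
    (hEd : ∀ s, HasDerivAt Eng (E' s) s)
    (hE' : ∀ s, 0 ≤ s → E' s ≤ -γ * Eng s) {t : ℝ} (ht : 0 ≤ t) :
    Eng t * Real.exp (γ*t) ≤ Eng 0 := by
  set F : ℝ → ℝ := fun s => Eng s * Real.exp (γ*s) with hF
  have hFd : ∀ s, HasDerivAt F (E' s * Real.exp (γ*s) + Eng s * (Real.exp (γ*s)*(γ*1))) s :=
    fun s => (hEd s).mul (((hasDerivAt_id s).const_mul γ).exp)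
  have hanti : AntitoneOn F (Ici 0) := by
    apply antitoneOn_of_deriv_nonpos (convex_Ici 0)
    · have hEc : Continuous Eng := by
        have : Differentiable ℝ Eng := fun s => (hEd s).differentiableAt
        exact this.continuous
      exact (hEc.mul (Real.continuous_exp.comp (continuous_const.mul continuous_id))).continuousOn
    · exact fun s _ => ((hFd s).differentiableAt).differentiableWithinAt
    · intro s hs
      rw [interior_Ici] at hs
      rw [(hFd s).deriv]
      have h1 := hE' s (le_of_lt hs)
      have h2 : E' s + γ * Eng s ≤ 0 := by linarith
      nlinarith [Real.exp_pos (γ*s), mul_nonpos_of_nonpos_of_nonneg h2 (Real.exp_pos (γ*s)).le]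
  have h := hanti (self_mem_Ici) (by exact ht) ht
  simpa [hF] using h


set_option maxHeartbeats 4000000 in
/-- Exponential decay of the `L²` norm of the perturbation of a steady state of
the transformed Keller–Segel system (nonlinear stability). -/
theorem stmt_19 (d ε χ μ : ℝ) (hd : 0 < d) (hε : 0 < ε) (hχ : 0 < χ) (hμ : 0 < μ)
    (ubar vbar : ℝ → ℝ) (hub : ContDiff ℝ 2 ubar) (hvb : ContDiff ℝ 2 vbar)
    (umin umax : ℝ) (humin : 0 < umin) (humax : umin ≤ umax)
    (hbd : ∀ x ∈ Set.Icc (0 : ℝ) 1, umin ≤ ubar x ∧ ubar x ≤ umax)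
    (hmono : ∀ x ∈ Set.Icc (0 : ℝ) 1, 0 ≤ deriv vbar x)
    (hL : ∀ x ∈ Set.Icc (0 : ℝ) 1,
      deriv (deriv ubar) x / 2 - 2 * vbar x * deriv ubar x
        + deriv (fun y => ubar y * vbar y) x ≤ 0) :
    ∀ M > (0 : ℝ), ∃ δ₁ > (0 : ℝ), ∃ C > (0 : ℝ), ∃ γ > (0 : ℝ),
      ∀ ut vt : ℝ × ℝ → ℝ,
      ContDiff ℝ (⊤ : ℕ∞) ut → ContDiff ℝ (⊤ : ℕ∞) vt →
      (∀ t : ℝ, 0 ≤ t → ∀ x ∈ Set.Icc (0 : ℝ) 1,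
        deriv (fun s => ut (s, x)) t =
          d * deriv (fun y => deriv (fun z => ut (t, z)) y) x
            - χ * deriv (fun y =>
                ut (t, y) * vt (t, y) + ubar y * vt (t, y) + vbar y * ut (t, y)) x) →
      (∀ t : ℝ, 0 ≤ t → ∀ x ∈ Set.Icc (0 : ℝ) 1,
        deriv (fun s => vt (s, x)) t =
          ε * deriv (fun y => deriv (fun z => vt (t, z)) y) x
            + ε * deriv (fun y => (vt (t, y)) ^ 2 + 2 * vbar y * vt (t, y)) x
            - μ * deriv (fun y => ut (t, y)) x) →
      (∀ t : ℝ, 0 ≤ t →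
        ut (t, 0) = 0 ∧ ut (t, 1) = 0 ∧ vt (t, 0) = 0 ∧ vt (t, 1) = 0) →
      (∀ t : ℝ, 0 ≤ t →
        Real.sqrt (∫ x in (0 : ℝ)..1, (ut (t, x)) ^ 2)
          + Real.sqrt (∫ x in (0 : ℝ)..1, (vt (t, x)) ^ 2) ≤ δ₁) →
      (∀ t : ℝ, 0 ≤ t →
        Real.sqrt (∫ x in (0 : ℝ)..1, (deriv (fun y => ut (t, y)) x) ^ 2)
          + Real.sqrt (∫ x in (0 : ℝ)..1, (deriv (fun y => vt (t, y)) x) ^ 2) ≤ M) →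
      ∀ t : ℝ, 0 ≤ t →
        (∫ x in (0 : ℝ)..1, (ut (t, x)) ^ 2) + (∫ x in (0 : ℝ)..1, (vt (t, x)) ^ 2)
          ≤ C * Real.exp (-γ * t) *
              ((∫ x in (0 : ℝ)..1, (ut (0, x)) ^ 2)
                + (∫ x in (0 : ℝ)..1, (vt (0, x)) ^ 2)) := by
  intro M hM
  -- bound on the derivative of ubar
  have hcU1 : Continuous (deriv ubar) := by
    have h1 : ContDiff ℝ 1 (deriv ubar) := by
      have := (contDiff_succ_iff_deriv (n:=1)).mp (by exact_mod_cast hub)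
      exact this.2.2
    exact h1.continuous
  obtain ⟨K, hK⟩ : ∃ K, ∀ x ∈ Icc (0:ℝ) 1, |deriv ubar x| ≤ K := by
    obtain ⟨K, hK⟩ := (isCompact_Icc (a := (0:ℝ)) (b := 1)).exists_bound_of_continuousOn
      hcU1.continuousOn
    exact ⟨K, fun x hx => by simpa [Real.norm_eq_abs] using hK x hx⟩
  have hK0 : 0 ≤ K := le_trans (abs_nonneg _) (hK 0 ⟨le_rfl, zero_le_one⟩)
  have hden : (0:ℝ) < K + umax + 1 := by nlinarith
  -- choice of constants
  set η : ℝ := min (d/(2*χ)) (umin/(4*(K+umax+1))) with hηdef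
  have hη0 : 0 < η := lt_min (by positivity) (by positivity)
  have hη1 : χ*η ≤ d/2 := by
    have h := min_le_left (d/(2*χ)) (umin/(4*(K+umax+1)))
    rw [← hηdef] at h
    calc χ*η ≤ χ*(d/(2*χ)) := mul_le_mul_of_nonneg_left h hχ.le
      _ = d/2 := by field_simp
  have hηq : η ≤ umin/(4*(K+umax+1)) := by
    have h := min_le_right (d/(2*χ)) (umin/(4*(K+umax+1)))
    rwa [← hηdef] at h
  have hη2 : K*η ≤ umin/4 := by
    have h1 : K*η ≤ K*(umin/(4*(K+umax+1))) := mul_le_mul_of_nonneg_left hηq hK0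
    have h2 : K*(umin/(4*(K+umax+1))) ≤ umin/4 := by
      rw [← mul_div_assoc, div_le_div_iff₀ (by positivity) (by norm_num)]
      nlinarith [mul_nonneg hK0 humin.le, mul_nonneg humin.le (le_trans humin.le humax)]
    linarith
  have hη3 : umax*η ≤ umin/4 := by
    have humax0 : (0:ℝ) ≤ umax := le_trans humin.le humax
    have h1 : umax*η ≤ umax*(umin/(4*(K+umax+1))) := mul_le_mul_of_nonneg_left hηq humax0
    have h2 : umax*(umin/(4*(K+umax+1))) ≤ umin/4 := by
      rw [← mul_div_assoc, div_le_div_iff₀ (by positivity) (by norm_num)]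
      nlinarith [mul_nonneg humax0 humin.le, mul_nonneg humin.le hK0, humin.le]
    linarith
  set δ₁ : ℝ := η^2/(2*M) with hδ₁def
  have hδ₁0 : 0 < δ₁ := by positivity
  set βlow : ℝ := min (1/2) (χ*umin/(2*μ)) with hβlowdef
  set βhigh : ℝ := max (1/2) (χ*umax/(2*μ)) with hβhighdef
  set α : ℝ := min (d/2) (χ*ε*umin/(2*μ)) with hαdef
  have hβlow0 : 0 < βlow := lt_min (by norm_num) (by positivity)
  have hβhigh0 : 0 < βhigh := lt_of_lt_of_le (by norm_num) (le_max_left _ _)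
  have hα0 : 0 < α := lt_min (by positivity) (by positivity)
  set γ : ℝ := α/βhigh with hγdef
  have hγ0 : 0 < γ := div_pos hα0 hβhigh0
  set C : ℝ := βhigh/βlow with hCdef
  have hC0 : 0 < C := div_pos hβhigh0 hβlow0
  have hγβ : γ * βhigh = α := div_mul_cancel₀ _ (ne_of_gt hβhigh0)
  refine ⟨δ₁, hδ₁0, C, hC0, γ, hγ0, ?_⟩
  intro ut vt hut hvt hPDEu hPDEv hBC hδ hM'
  have hut' : ContDiff ℝ (⊤:ℕ∞) ut := hut.of_le (by simp)
  have hvt' : ContDiff ℝ (⊤:ℕ∞) vt := hvt.of_le (by simp)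
  have hutc : Continuous ut := hut'.continuous
  have hvtc : Continuous vt := hvt'.continuous
  have hcU : Continuous ubar := (hub.differentiable (by norm_num)).continuous
  -- time-partial derivatives
  set Pu : ℝ×ℝ → ℝ := fun p => fderiv ℝ ut p (1,0) with hPudef
  set Pv : ℝ×ℝ → ℝ := fun p => fderiv ℝ vt p (1,0) with hPvdef
  have hPu : ∀ s x, HasDerivAt (fun r => ut (r,x)) (Pu (s,x)) s := fun s x =>
    (hut.differentiable (by simp) (s,x)).hasFDerivAt.comp_hasDerivAt s
      ((hasDerivAt_id s).prodMk (hasDerivAt_const s x))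
  have hPv : ∀ s x, HasDerivAt (fun r => vt (r,x)) (Pv (s,x)) s := fun s x =>
    (hvt.differentiable (by simp) (s,x)).hasFDerivAt.comp_hasDerivAt s
      ((hasDerivAt_id s).prodMk (hasDerivAt_const s x))
  have hPuc : Continuous Pu := by
    rw [hPudef]; exact (hut.continuous_fderiv (by simp)).clm_apply continuous_const
  have hPvc : Continuous Pv := by
    rw [hPvdef]; exact (hvt.continuous_fderiv (by simp)).clm_apply continuous_const
  -- energy and its derivative
  set Eng : ℝ → ℝ := fun s => ∫ x in (0:ℝ)..1,
      ((1/2)*(ut (s,x))^2 + (χ/(2*μ))*(ubar x*(vt (s,x))^2)) with hEngdef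
  set E' : ℝ → ℝ := fun s => ∫ x in (0:ℝ)..1,
      (ut (s,x)*Pu (s,x) + (χ/μ)*(ubar x*(vt (s,x)*Pv (s,x)))) with hE'def
  have hEd : ∀ s, HasDerivAt Eng (E' s) s := by
    intro s
    have h := dint (fun p => (1/2)*(ut p)^2 + (χ/(2*μ))*(ubar p.2*(vt p)^2))
      (fun p => ut p*Pu p + (χ/μ)*(ubar p.2*(vt p*Pv p)))
      (by fun_prop) (by fun_prop)
      (fun r x => by
        have h := (((hPu r x).fun_pow 2).const_mul ((1:ℝ)/2)).add
          ((((hPv r x).fun_pow 2).const_mul (ubar x)).const_mul (χ/(2*μ)))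
        refine h.congr_deriv ?_
        have hμ' : μ ≠ 0 := ne_of_gt hμ
        show _ = ut (r,x)*Pu (r,x) + (χ/μ)*(ubar x*(vt (r,x)*Pv (r,x)))
        push_cast
        field_simp) s
    exact h
  have hu2c : ∀ s, Continuous (fun x => ut (s,x)) :=
    fun s => hutc.comp (continuous_const.prodMk continuous_id)
  have hv2c : ∀ s, Continuous (fun x => vt (s,x)) :=
    fun s => hvtc.comp (continuous_const.prodMk continuous_id)
  have hXnn : ∀ s, (0:ℝ) ≤ ∫ x in (0:ℝ)..1, (ut (s,x))^2 :=
    fun s => intervalIntegral.integral_nonneg zero_le_one (fun u _ => sq_nonneg _)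
  have hYnn : ∀ s, (0:ℝ) ≤ ∫ x in (0:ℝ)..1, (vt (s,x))^2 :=
    fun s => intervalIntegral.integral_nonneg zero_le_one (fun u _ => sq_nonneg _)
  have hlin : ∀ (β : ℝ) (s : ℝ), (∫ x in (0:ℝ)..1, β*((ut (s,x))^2 + (vt (s,x))^2))
      = β*((∫ x in (0:ℝ)..1, (ut (s,x))^2) + (∫ x in (0:ℝ)..1, (vt (s,x))^2)) := by
    intro β s
    rw [intervalIntegral.integral_const_mul, intervalIntegral.integral_add
      (Continuous.intervalIntegrable (by fun_prop) 0 1)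
      (Continuous.intervalIntegrable (by fun_prop) 0 1)]
  have hEngUB : ∀ s, Eng s ≤ βhigh*((∫ x in (0:ℝ)..1, (ut (s,x))^2)
      + (∫ x in (0:ℝ)..1, (vt (s,x))^2)) := by
    intro s
    have h1 : Eng s ≤ ∫ x in (0:ℝ)..1, βhigh*((ut (s,x))^2 + (vt (s,x))^2) := by
      simp only [hEngdef]
      apply intervalIntegral.integral_mono_on zero_le_one
        (Continuous.intervalIntegrable (by fun_prop) 0 1)
        (Continuous.intervalIntegrable (by fun_prop) 0 1)
      intro x hx
      have hb1 := (hbd x hx).2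
      have h2 : (1:ℝ)/2 ≤ βhigh := le_max_left _ _
      have h3 : (χ/(2*μ))*umax ≤ βhigh := by
        calc (χ/(2*μ))*umax = χ*umax/(2*μ) := by ring
          _ ≤ βhigh := le_max_right _ _
      have hcc0 : (0:ℝ) ≤ χ/(2*μ) := by positivity
      generalize hg : χ/(2*μ) = cc at h3 hcc0 ⊢
      have h4 : cc*(ubar x) ≤ cc*umax := mul_le_mul_of_nonneg_left hb1 hcc0
      nlinarith [mul_le_mul_of_nonneg_right h4 (sq_nonneg (vt (s,x))),
        mul_le_mul_of_nonneg_right h3 (sq_nonneg (vt (s,x))),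
        mul_le_mul_of_nonneg_right h2 (sq_nonneg (ut (s,x)))]
    rw [hlin βhigh s] at h1
    exact h1
  have hEngLB : ∀ s, βlow*((∫ x in (0:ℝ)..1, (ut (s,x))^2)
      + (∫ x in (0:ℝ)..1, (vt (s,x))^2)) ≤ Eng s := by
    intro s
    have h1 : (∫ x in (0:ℝ)..1, βlow*((ut (s,x))^2 + (vt (s,x))^2)) ≤ Eng s := by
      simp only [hEngdef]
      apply intervalIntegral.integral_mono_on zero_le_one
        (Continuous.intervalIntegrable (by fun_prop) 0 1)
        (Continuous.intervalIntegrable (by fun_prop) 0 1)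
      intro x hx
      have hb1 := (hbd x hx).1
      have h2 : βlow ≤ (1:ℝ)/2 := min_le_left _ _
      have h3 : βlow ≤ (χ/(2*μ))*umin := by
        calc βlow ≤ χ*umin/(2*μ) := min_le_right _ _
          _ = (χ/(2*μ))*umin := by ring
      have hcc0 : (0:ℝ) ≤ χ/(2*μ) := by positivity
      generalize hg : χ/(2*μ) = cc at h3 hcc0 ⊢
      have h4 : cc*umin ≤ cc*(ubar x) := mul_le_mul_of_nonneg_left hb1 hcc0
      nlinarith [mul_le_mul_of_nonneg_right h4 (sq_nonneg (vt (s,x))),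
        mul_le_mul_of_nonneg_right h3 (sq_nonneg (vt (s,x))),
        mul_le_mul_of_nonneg_right h2 (sq_nonneg (ut (s,x)))]
    rw [hlin βlow s] at h1
    exact h1
  -- the differential inequality
  have hE'b : ∀ s, 0 ≤ s → E' s ≤ -γ * Eng s := by
    intro s hs
    have ha : ContDiff ℝ (⊤:ℕ∞) (fun y => ut (s,y)) :=
      hut'.comp (contDiff_const.prodMk contDiff_id)
    have hbSm : ContDiff ℝ (⊤:ℕ∞) (fun y => vt (s,y)) :=
      hvt'.comp (contDiff_const.prodMk contDiff_id)
    have haD : Differentiable ℝ (fun y => ut (s,y)) := ha.differentiable (by simp)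
    have hbD : Differentiable ℝ (fun y => vt (s,y)) := hbSm.differentiable (by simp)
    have ha1c : Continuous (deriv (fun y => ut (s,y))) :=
      ((contDiff_infty_iff_deriv.mp ha).2).continuous
    have hb1c : Continuous (deriv (fun y => vt (s,y))) :=
      ((contDiff_infty_iff_deriv.mp hbSm).2).continuous
    have hBCs := hBC s hs
    have hsm : ∀ x ∈ Icc (0:ℝ) 1, |ut (s,x)| ≤ η ∧ |vt (s,x)| ≤ η := by
      intro x hx
      have hδs := hδ s hs
      have hMs := hM' s hs
      have hA0 := Real.sqrt_nonneg (∫ x in (0:ℝ)..1, (ut (s,x))^2)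
      have hB0 := Real.sqrt_nonneg (∫ x in (0:ℝ)..1, (vt (s,x))^2)
      have hA0' := Real.sqrt_nonneg (∫ x in (0:ℝ)..1, (deriv (fun y => ut (s,y)) x)^2)
      have hB0' := Real.sqrt_nonneg (∫ x in (0:ℝ)..1, (deriv (fun y => vt (s,y)) x)^2)
      have hsqA : Real.sqrt (∫ x in (0:ℝ)..1, (ut (s,x))^2) ≤ δ₁ := by linarith
      have hsqB : Real.sqrt (∫ x in (0:ℝ)..1, (vt (s,x))^2) ≤ δ₁ := by linarith
      have hsqA' : Real.sqrt (∫ x in (0:ℝ)..1, (deriv (fun y => ut (s,y)) x)^2) ≤ M := by linarith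
      have hsqB' : Real.sqrt (∫ x in (0:ℝ)..1, (deriv (fun y => vt (s,y)) x)^2) ≤ M := by linarith
      have hkey : 2*δ₁*M = η^2 := by
        have hM0 : M ≠ 0 := ne_of_gt hM
        simp only [hδ₁def]
        field_simp
      constructor
      · have h1 := sobolev haD ha1c hBCs.1 hx
        have h2 : Real.sqrt (∫ x in (0:ℝ)..1, (ut (s,x))^2)
            * Real.sqrt (∫ x in (0:ℝ)..1, (deriv (fun y => ut (s,y)) x)^2) ≤ δ₁*M :=
          mul_le_mul hsqA hsqA' hA0' hδ₁0.le
        have h3 : (ut (s,x))^2 ≤ η^2 := by nlinarith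
        have h4 := Real.sqrt_le_sqrt h3
        rwa [Real.sqrt_sq_eq_abs, Real.sqrt_sq hη0.le] at h4
      · have h1 := sobolev hbD hb1c hBCs.2.2.1 hx
        have h2 : Real.sqrt (∫ x in (0:ℝ)..1, (vt (s,x))^2)
            * Real.sqrt (∫ x in (0:ℝ)..1, (deriv (fun y => vt (s,y)) x)^2) ≤ δ₁*M :=
          mul_le_mul hsqB hsqB' hB0' hδ₁0.le
        have h3 : (vt (s,x))^2 ≤ η^2 := by nlinarith
        have h4 := Real.sqrt_le_sqrt h3
        rwa [Real.sqrt_sq_eq_abs, Real.sqrt_sq hη0.le] at h4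
    have hcore := core d ε χ μ umin umax K η hd hε hχ hμ humin humax ubar vbar hub hvb
      hbd hmono hL hK (fun y => ut (s,y)) (fun y => vt (s,y)) ha hbSm
      hBCs.1 hBCs.2.1 hBCs.2.2.1 hBCs.2.2.2 hsm hη0.le hη1 hη2 hη3
    refine le_trans (le_of_eq ?_) (le_trans hcore ?_)
    · simp only [hE'def]
      apply intervalIntegral.integral_congr
      intro x hx
      rw [Set.uIcc_of_le zero_le_one] at hx
      have e1 : Pu (s,x) = d * deriv (fun y => deriv (fun z => ut (s, z)) y) x
          - χ * deriv (fun y => ut (s, y) * vt (s, y) + ubar y * vt (s, y)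
            + vbar y * ut (s, y)) x :=
        ((hPu s x).deriv).symm.trans (hPDEu s hs x hx)
      have e2 : Pv (s,x) = ε * deriv (fun y => deriv (fun z => vt (s, z)) y) x
          + ε * deriv (fun y => (vt (s, y))^2 + 2*vbar y*vt (s, y)) x
          - μ * deriv (fun y => ut (s, y)) x :=
        ((hPv s x).deriv).symm.trans (hPDEv s hs x hx)
      simp only [e1, e2]
    · have h1 := hEngUB s
      have hX := hXnn s
      have hY := hYnn s
      have pγ : γ*Eng s ≤ γ*(βhigh*((∫ x in (0:ℝ)..1, (ut (s,x))^2)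
          + (∫ x in (0:ℝ)..1, (vt (s,x))^2))) := mul_le_mul_of_nonneg_left h1 hγ0.le
      have eα : γ*(βhigh*((∫ x in (0:ℝ)..1, (ut (s,x))^2)
          + (∫ x in (0:ℝ)..1, (vt (s,x))^2)))
          = α*((∫ x in (0:ℝ)..1, (ut (s,x))^2) + (∫ x in (0:ℝ)..1, (vt (s,x))^2)) := by
        rw [← hγβ]; ring
      have hα1 : α ≤ d/2 := min_le_left _ _
      have hα2 : α ≤ χ*ε*umin/(2*μ) := min_le_right _ _
      have q1 := mul_le_mul_of_nonneg_right hα1 hX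
      have q2 := mul_le_mul_of_nonneg_right hα2 hY
      linarith [pγ, eα, q1, q2]
  -- Grönwall and conclusion
  intro t ht
  have hg := gron Eng E' γ hγ0 hEd hE'b ht
  have hexp0 : (0:ℝ) ≤ Real.exp (-γ*t) := (Real.exp_pos _).le
  have h2' : Eng t ≤ Eng 0 * Real.exp (-γ*t) := by
    have hpos := Real.exp_pos (γ*t)
    have h := (le_div_iff₀ hpos).mpr hg
    calc Eng t ≤ Eng 0/Real.exp (γ*t) := h
      _ = Eng 0 * Real.exp (-γ*t) := by
        rw [show (-γ*t) = -(γ*t) by ring, Real.exp_neg]; ring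
  have hlb := hEngLB t
  have hub0 := hEngUB 0
  have h3 : Eng 0 * Real.exp (-γ*t)
      ≤ (βhigh*((∫ x in (0:ℝ)..1, (ut (0,x))^2) + (∫ x in (0:ℝ)..1, (vt (0,x))^2)))
        * Real.exp (-γ*t) := mul_le_mul_of_nonneg_right hub0 hexp0
  rw [hCdef]
  calc (∫ x in (0:ℝ)..1, (ut (t,x))^2) + (∫ x in (0:ℝ)..1, (vt (t,x))^2)
      ≤ ((βhigh*((∫ x in (0:ℝ)..1, (ut (0,x))^2) + (∫ x in (0:ℝ)..1, (vt (0,x))^2)))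
          * Real.exp (-γ*t))/βlow := by
        rw [le_div_iff₀ hβlow0]
        nlinarith [hlb, h2', h3]
    _ = βhigh/βlow * Real.exp (-γ*t)
        * ((∫ x in (0:ℝ)..1, (ut (0,x))^2) + (∫ x in (0:ℝ)..1, (vt (0,x))^2)) := by
        ring
end
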